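/- arXiv:1101.4497 — 9 statements merged into one kernel-verified Lean document; each statement's English description precedes it below -/
import Mathlib

section
/- Let S be a noncommutative series over A solving dS = MS with ⟨S,1⟩ = 1, where M = Σ_{x∈X} u_x x with u_x ∈ C. Suppose that for every f ∈ C and every finitely supported family (α_x)_{x∈X} of elements of k, the equation d(f) = Σ_{x∈X} α_x u_x implies α_x = 0 for all x ∈ X. Then the family (⟨S,w⟩)_{w∈X*} is linearly independent over C, i.e. every finitely supported map P : X* → C with Σ_{w} P(w)·⟨S,w⟩ = 0 is identically zero. -/
/-- **(iii) ⟹ (i) of Theorem 1.**  In a commutative differential `k`-algebra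
`(A,d)` with constants `k·1` and differential subfield `C`, let `S` solve
`dS = MS`, `⟨S,1⟩ = 1` with multiplier `M = Σ_x u_x x` (`u_x ∈ C`).  If for
every `f ∈ C` and finitely supported `(α_x)_{x∈X}` in `k` the relation
`d(f) = Σ_x α_x u_x` forces all `α_x = 0`, then the family `(⟨S,w⟩)_{w∈X*}` is
linearly independent over `C`: every finitely supported `P : X* → C` with
`Σ_w P(w)·⟨S,w⟩ = 0` vanishes identically. -/
theorem hyperlog_no_primitive_implies_words_free
    {k : Type*} [Field k] [CharZero k]
    {A : Type*} [CommRing A] [Algebra k A]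
    (d : Derivation k A A)
    (hconst : ∀ a : A, d a = 0 ↔ ∃ c : k, a = algebraMap k A c)
    (C : Subalgebra k A)
    (hCfield : ∀ c ∈ C, c ≠ 0 → ∃ c' ∈ C, c * c' = 1)
    (hCdiff : ∀ c ∈ C, d c ∈ C)
    {X : Type*}
    (u : X → A) (hu : ∀ x, u x ∈ C)
    (S : List X → A)
    (hS1 : S [] = 1)
    (hSdiff : ∀ (x : X) (w : List X), d (S (x :: w)) = u x * S w)
    -- (iii) : no nonzero k-linear combination of the u_x is a derivative of an element of C
    (hiii : ∀ f ∈ C, ∀ α : X →₀ k,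
      d f = (α.sum fun x c => algebraMap k A c * u x) → α = 0) :
    -- (i)
    ∀ P : List X →₀ A, (∀ w, P w ∈ C) →
      (P.sum fun w c => c * S w) = 0 → P = 0 := by
  classical
  rcases subsingleton_or_nontrivial A with hA | hA
  · intro P _ _
    ext w
    exact Subsingleton.elim _ _
  have hinj : Function.Injective (algebraMap k A) := (algebraMap k A).injective
  -- the evaluation map as a linear map
  set L : (List X →₀ A) →ₗ[A] A := Finsupp.linearCombination A S with hLdef
  have hLapp : ∀ R : List X →₀ A, L R = R.sum fun w c => c * S w := by
    intro R
    rw [hLdef, Finsupp.linearCombination_apply]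
    simp only [smul_eq_mul]
  -- main claim, by double induction on (N, m)
  suffices key : ∀ N : ℕ, ∀ m : ℕ, ∀ P : List X →₀ A, (∀ w, P w ∈ C) →
      (P.sum fun w c => c * S w) = 0 → (∀ w ∈ P.support, w.length ≤ N) →
      (P.support.filter fun w => w.length = N).card = m → P = 0 by
    intro P hPC hPsum
    exact key (P.support.sup fun w => w.length) _ P hPC hPsum
      (fun w hw => Finset.le_sup hw) rfl
  intro N
  induction N using Nat.strong_induction_on with
  | _ N ihN =>
  intro m
  induction m using Nat.strong_induction_on with
  | _ m ihm =>
  intro P hPC hPsum hbd hcard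
  -- case N = 0
  rcases N with _ | N
  · -- all words in the support are empty
    have hsupp : ∀ w ∈ P.support, w = [] := fun w hw =>
      List.length_eq_zero_iff.mp (Nat.le_zero.mp (hbd w hw))
    have hnil : P [] = 0 := by
      have h1 : (P.sum fun w c => c * S w) = P [] * S [] :=
        Finsupp.sum_eq_single [] (fun b hb hb' => absurd (hsupp b (Finsupp.mem_support_iff.2 hb)) hb')
          (fun _ => by rw [zero_mul])
      have h2 : P [] * S [] = 0 := h1 ▸ hPsum
      rwa [hS1, mul_one] at h2
    ext w
    rcases eq_or_ne w [] with rfl | hw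
    · exact hnil
    · by_contra h
      exact hw (hsupp w (Finsupp.mem_support_iff.2 h))
  -- case N = N + 1
  by_cases hm0 : (P.support.filter fun w => w.length = N + 1) = ∅
  · -- no words of maximal length: decrease N
    refine ihN N (Nat.lt_succ_self N) _ P hPC hPsum (fun w hw => ?_) rfl
    have h1 : w.length ≤ N + 1 := hbd w hw
    have h2 : w.length ≠ N + 1 := by
      intro h
      exact absurd (Finset.mem_filter.2 ⟨hw, h⟩) (by rw [hm0]; exact Finset.notMem_empty w)
    omega
  · -- there is a word of maximal length
    exfalso
    obtain ⟨w₀, hw₀⟩ := Finset.nonempty_iff_ne_empty.2 hm0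
    have hw₀supp : w₀ ∈ P.support := (Finset.mem_filter.mp hw₀).1
    have hw₀len : w₀.length = N + 1 := (Finset.mem_filter.mp hw₀).2
    obtain ⟨x₀, t₀, rfl⟩ : ∃ x t, w₀ = x :: t := by
      cases w₀ with
      | nil => simp at hw₀len
      | cons x t => exact ⟨x, t, rfl⟩
    have ht₀len : t₀.length = N := by simpa using hw₀len
    -- normalize the coefficient of w₀ to 1
    have hc0 : P (x₀ :: t₀) ≠ 0 := Finsupp.mem_support_iff.mp hw₀supp
    obtain ⟨c', hc'C, hcc'⟩ := hCfield _ (hPC (x₀ :: t₀)) hc0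
    set P' : List X →₀ A := c' • P with hP'def
    have hP'app : ∀ w, P' w = c' * P w := fun w => rfl
    have hP'C : ∀ w, P' w ∈ C := fun w => mul_mem hc'C (hPC w)
    have hP'sum : (P'.sum fun w c => c * S w) = 0 := by
      rw [← hLapp]
      rw [hP'def, map_smul]
      rw [hLapp, hPsum, smul_zero]
    have hP'supp : P'.support ⊆ P.support := by
      intro w hw
      rw [Finsupp.mem_support_iff] at hw ⊢
      intro h
      exact hw (by rw [hP'app, h, mul_zero])
    have hP'bd : ∀ w ∈ P'.support, w.length ≤ N + 1 := fun w hw => hbd w (hP'supp hw)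
    have hP'w₀ : P' (x₀ :: t₀) = 1 := by rw [hP'app, mul_comm]; exact hcc'
    -- the differentiated relation Q
    set G : List X → A → (List X →₀ A) := fun v c =>
      match v with
      | [] => 0
      | x :: t => Finsupp.single t (u x * c) with hG
    set Q : List X →₀ A := Finsupp.mapRange (⇑d) (map_zero d) P' + P'.sum G with hQdef
    have hQapp : ∀ w, Q w = d (P' w) + ∑ v ∈ P'.support, (G v (P' v)) w := by
      intro w
      rw [hQdef, Finsupp.add_apply, Finsupp.mapRange_apply, Finsupp.sum_apply, Finsupp.sum]
    -- the shifted part vanishes on words of length ≥ N+1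
    have hGzero : ∀ w : List X, N + 1 ≤ w.length → ∀ v ∈ P'.support, (G v (P' v)) w = 0 := by
      intro w hwlen v hv
      cases v with
      | nil => simp [hG]
      | cons x t =>
        rcases eq_or_ne t w with rfl | htw
        · exfalso
          have := hP'bd _ hv
          simp only [List.length_cons] at this
          omega
        · simp only [hG]
          exact Finsupp.single_eq_of_ne' htw
    have hsum_zero : ∀ w : List X, N + 1 ≤ w.length → (∑ v ∈ P'.support, (G v (P' v)) w) = 0 :=
      fun w hw => Finset.sum_eq_zero (hGzero w hw)
    -- Q evaluates the derivative of the relation: its relation sum is 0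
    have hQsum : (Q.sum fun w c => c * S w) = 0 := by
      have e1 : L Q = (∑ w ∈ P'.support, d (P' w) * S w) +
          ∑ v ∈ P'.support, (match v with
            | [] => (0 : A)
            | x :: t => u x * P' v * S t) := by
        rw [hQdef, map_add]
        congr 1
        · rw [hLapp, Finsupp.sum_mapRange_index (fun w => by rw [zero_mul])]
          rfl
        · rw [Finsupp.sum, map_sum]
          refine Finset.sum_congr rfl fun v hv => ?_
          cases v with
          | nil => simp [hG]
          | cons x t =>
            rw [hLapp]
            simp only [hG]
            rw [Finsupp.sum_single_index (by rw [zero_mul])]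
      have e2 : d (L P') = (∑ w ∈ P'.support, d (P' w) * S w) +
          ∑ v ∈ P'.support, (match v with
            | [] => (0 : A)
            | x :: t => u x * P' v * S t) := by
        rw [hLapp, Finsupp.sum, map_sum, ← Finset.sum_add_distrib]
        refine Finset.sum_congr rfl fun v hv => ?_
        rw [Derivation.leibniz]
        cases v with
        | nil =>
          simp only [smul_eq_mul, hS1, Derivation.map_one_eq_zero]
          ring
        | cons x t =>
          simp only [smul_eq_mul, hSdiff]
          ring
      have : L Q = 0 := by
        rw [e1, ← e2, hLapp, hP'sum, map_zero]
      rwa [hLapp] at this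
    -- coefficients of Q lie in C
    have hQC : ∀ w, Q w ∈ C := by
      intro w
      rw [hQapp]
      refine add_mem (hCdiff _ (hP'C w)) (sum_mem fun v hv => ?_)
      cases v with
      | nil => simpa [hG] using zero_mem C
      | cons x t =>
        simp only [hG, Finsupp.single_apply]
        split
        · exact mul_mem (hu x) (hP'C (x :: t))
        · exact zero_mem C
    -- support bound for Q
    have hQbd : ∀ w ∈ Q.support, w.length ≤ N + 1 := by
      intro w hw
      by_contra h
      push_neg at h
      apply Finsupp.mem_support_iff.mp hw
      rw [hQapp, hsum_zero w (by omega), add_zero]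
      have : P' w = 0 := by
        by_contra h'
        have := hP'bd w (Finsupp.mem_support_iff.2 h')
        omega
      rw [this, map_zero]
    -- top coefficients of Q : strictly fewer than those of P
    have hQtop : ∀ w : List X, w.length = N + 1 → Q w = d (P' w) := by
      intro w hw
      rw [hQapp, hsum_zero w (le_of_eq hw.symm), add_zero]
    have hQcard : (Q.support.filter fun w => w.length = N + 1).card < m := by
      have hsub : (Q.support.filter fun w => w.length = N + 1) ⊆
          (P.support.filter fun w => w.length = N + 1).erase (x₀ :: t₀) := by
        intro w hw
        obtain ⟨hw1, hw2⟩ := Finset.mem_filter.mp hw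
        have hQw : Q w ≠ 0 := Finsupp.mem_support_iff.mp hw1
        rw [hQtop w hw2] at hQw
        have hP'w : P' w ≠ 0 := fun h => hQw (by rw [h, map_zero])
        refine Finset.mem_erase.mpr ⟨?_, Finset.mem_filter.mpr ⟨hP'supp (Finsupp.mem_support_iff.2 hP'w), hw2⟩⟩
        intro h
        rw [h, hP'w₀, Derivation.map_one_eq_zero] at hQw
        exact hQw rfl
      calc (Q.support.filter fun w => w.length = N + 1).card
          ≤ ((P.support.filter fun w => w.length = N + 1).erase (x₀ :: t₀)).card :=
            Finset.card_le_card hsub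
        _ < (P.support.filter fun w => w.length = N + 1).card :=
            Finset.card_erase_lt_of_mem hw₀
        _ = m := hcard
    -- apply the inner induction hypothesis : Q = 0
    have hQ0 : Q = 0 := ihm _ hQcard Q hQC hQsum hQbd rfl
    have hQ0' : ∀ w, d (P' w) + ∑ v ∈ P'.support, (G v (P' v)) w = 0 := by
      intro w
      rw [← hQapp, hQ0]
      rfl
    -- top coefficients of P' are constants
    have hconstTop : ∀ w : List X, w.length = N + 1 → ∃ c : k, P' w = algebraMap k A c := by
      intro w hw
      have := hQ0' w
      rw [hsum_zero w (le_of_eq hw.symm), add_zero] at this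
      exact (hconst (P' w)).mp this
    -- build the finitely supported family α over X
    set β : X →₀ A := Finsupp.comapDomain (fun x => x :: t₀) P'
      (fun a _ b _ h => by injection h) with hβdef
    have hβapp : ∀ x, β x = P' (x :: t₀) := fun x => rfl
    have hlen : ∀ x : X, (x :: t₀).length = N + 1 := fun x => by simp [ht₀len]
    set cfun : X → k := fun x => (hconstTop (x :: t₀) (hlen x)).choose with hcfundef
    have hcfun : ∀ x, P' (x :: t₀) = algebraMap k A (cfun x) :=
      fun x => (hconstTop (x :: t₀) (hlen x)).choose_spec
    have hcfun0 : ∀ x, cfun x ≠ 0 → x ∈ β.support := by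
      intro x hx
      rw [Finsupp.mem_support_iff, hβapp]
      intro h
      apply hx
      apply hinj
      rw [← hcfun x, h, map_zero]
    set α : X →₀ k := Finsupp.onFinset β.support cfun hcfun0 with hαdef
    have hαapp : ∀ x, α x = cfun x := fun x => rfl
    -- the crucial identity : d(-P' t₀) = Σ α_x u_x
    have hmain : d (-(P' t₀)) = α.sum fun x c => algebraMap k A c * u x := by
      have h1 : d (-(P' t₀)) = ∑ v ∈ P'.support, (G v (P' v)) t₀ := by
        rw [map_neg]
        exact neg_eq_of_add_eq_zero_right (hQ0' t₀)
      have h2 : (α.sum fun x c => algebraMap k A c * u x) =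
          ∑ x ∈ β.support, algebraMap k A (α x) * u x := by
        exact Finsupp.sum_of_support_subset α Finsupp.support_onFinset_subset _
          (fun x _ => by rw [map_zero, zero_mul])
      rw [h1, h2]
      -- reindex the left sum over the image of β.support
      have hIsub : Finset.image (fun x => x :: t₀) β.support ⊆ P'.support := by
        intro v hv
        obtain ⟨x, hx, rfl⟩ := Finset.mem_image.mp hv
        rw [Finsupp.mem_support_iff] at hx ⊢
        rwa [hβapp] at hx
      have h3 : (∑ v ∈ P'.support, (G v (P' v)) t₀) =
          ∑ v ∈ Finset.image (fun x => x :: t₀) β.support, (G v (P' v)) t₀ := by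
        refine (Finset.sum_subset hIsub ?_).symm
        intro v hv hvI
        cases v with
        | nil => simp [hG]
        | cons x t =>
          rcases eq_or_ne t t₀ with rfl | htt
          · have hx : x ∉ β.support := fun hx => hvI (Finset.mem_image.mpr ⟨x, hx, rfl⟩)
            rw [Finsupp.notMem_support_iff, hβapp] at hx
            simp only [hG, hx, mul_zero, Finsupp.single_zero, Finsupp.coe_zero, Pi.zero_apply]
          · simp only [hG]
            exact Finsupp.single_eq_of_ne' htt
      rw [h3, Finset.sum_image (fun a _ b _ h => by injection h)]
      refine Finset.sum_congr rfl fun x hx => ?_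
      simp only [hG, Finsupp.single_eq_same]
      rw [hαapp, ← hcfun, mul_comm]
    -- apply hypothesis (iii)
    have hα0 : α = 0 := hiii _ (neg_mem (hP'C t₀)) α hmain
    -- contradiction with P' w₀ = 1
    have : (1 : A) = 0 := by
      rw [← hP'w₀, hcfun x₀, ← hαapp, hα0]
      simp
    exact one_ne_zero this
end

section
/- Let (L_w)_{w∈X*} be a hyperlogarithm solution on V associated to the distinct singularities a_1,…,a_n and nonzero residues λ_1,…,λ_n. Then the family (L_w)_{w∈X*} is linearly independent over the field ℂ(z) of rational functions: if (f_w)_{w∈X*} is a finitely supported family of rational functions in ℂ(z) such that Σ_w f_w(z)·L_w(z) = 0 for all z in some nonempty open subset of V avoiding the poles of all f_w, then f_w = 0 for every word w. -/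
noncomputable section HyperlogAux
open Polynomial

lemma aux_poly_eq_zero_of_open {U : Set ℂ} (hUo : IsOpen U) (hUne : U.Nonempty)
    (p : ℂ[X]) (h : ∀ z ∈ U, p.eval z = 0) : p = 0 := by
  by_contra hp
  have hfin : {x : ℂ | p.IsRoot x}.Finite := Polynomial.finite_setOf_isRoot hp
  have hUfin : U.Finite := hfin.subset (fun z hz => h z hz)
  obtain ⟨z₀, hz₀⟩ := hUne
  obtain ⟨r, hr, hball⟩ := Metric.isOpen_iff.mp hUo z₀ hz₀
  have hinf : (Set.Ioo (0:ℝ) (r/2)).Infinite := Set.Ioo_infinite (by linarith)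
  have hmap : (fun t : ℝ => z₀ + (t:ℂ)) '' (Set.Ioo 0 (r/2)) ⊆ U := by
    rintro - ⟨t, ht, rfl⟩
    apply hball
    simp only [Metric.mem_ball, dist_eq_norm, add_sub_cancel_left]
    rw [Complex.norm_real, Real.norm_eq_abs]
    rw [abs_of_pos ht.1]
    linarith [ht.2]
  have : ((fun t : ℝ => z₀ + (t:ℂ)) '' (Set.Ioo 0 (r/2))).Infinite := by
    apply hinf.image
    intro s hs t ht hst
    have := add_left_cancel hst
    exact_mod_cast this
  exact this (hUfin.subset hmap)

lemma aux_wronskian {P Q : ℂ[X]} (hP : P ≠ 0)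
    (h : P * derivative Q = derivative P * Q) : ∃ c : ℂ, Q = C c * P := by
  by_cases hQ : Q = 0
  · exact ⟨0, by simp [hQ]⟩
  set d := GCDMonoid.gcd P Q with hd
  have hdne : d ≠ 0 := gcd_ne_zero_of_left hP
  set P1 := P / d with hP1
  set Q1 := Q / d with hQ1
  have hPd : d * P1 = P := EuclideanDomain.mul_div_cancel' hdne (gcd_dvd_left P Q)
  have hQd : d * Q1 = Q := EuclideanDomain.mul_div_cancel' hdne (gcd_dvd_right P Q)
  have hcop : IsCoprime P1 Q1 := isCoprime_div_gcd_div_gcd hQ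
  have hP1ne : P1 ≠ 0 := left_div_gcd_ne_zero hP
  have key : d * d * (P1 * derivative Q1 - derivative P1 * Q1) = 0 := by
    have := h
    rw [← hPd, ← hQd] at this
    rw [derivative_mul, derivative_mul] at this
    ring_nf
    ring_nf at this
    linear_combination this
  have hw : P1 * derivative Q1 = derivative P1 * Q1 := by
    have := mul_eq_zero.mp key
    rcases this with h1 | h1
    · exact absurd (mul_eq_zero.mp h1) (by simp [hdne])
    · linear_combination h1
  have hdvd : P1 ∣ derivative P1 * Q1 := ⟨derivative Q1, hw.symm⟩
  have hdvd' : P1 ∣ derivative P1 := hcop.dvd_of_dvd_mul_right hdvd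
  have hdP1 : derivative P1 = 0 := by
    by_contra hne
    exact hne (eq_zero_of_dvd_of_degree_lt hdvd' (degree_derivative_lt hP1ne))
  have hdQ1 : derivative Q1 = 0 := by
    have := hw
    rw [hdP1, zero_mul] at this
    exact (mul_eq_zero.mp this).resolve_left hP1ne
  obtain ⟨cp, hcp⟩ : ∃ cp : ℂ, P1 = C cp := ⟨P1.coeff 0, eq_C_of_derivative_eq_zero hdP1⟩
  obtain ⟨cq, hcq⟩ : ∃ cq : ℂ, Q1 = C cq := ⟨Q1.coeff 0, eq_C_of_derivative_eq_zero hdQ1⟩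
  have hcpne : cp ≠ 0 := fun hc => hP1ne (by rw [hcp, hc, map_zero])
  refine ⟨cq / cp, ?_⟩
  rw [← hQd, ← hPd, hcp, hcq]
  rw [← mul_assoc, mul_comm (C (cq/cp)) d, mul_assoc]
  congr 1
  rw [← C_mul, div_mul_cancel₀ _ hcpne]


lemma aux_deriv_pow_mul (a : ℂ) (m : ℕ) (S : ℂ[X]) :
    (X - C a) * derivative ((X - C a)^m * S)
      = C (m:ℂ) * ((X - C a)^m * S) + (X - C a)^(m+1) * derivative S := by
  cases m with
  | zero => simp [derivative_mul]
  | succ m =>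
      rw [derivative_mul, derivative_pow]
      simp only [derivative_X_sub_C, Nat.add_sub_cancel, Nat.cast_add, Nat.cast_one]
      ring

lemma aux_key (a : ℂ) (B P Q R : ℂ[X]) (hB : B.eval a ≠ 0) (hP : P ≠ 0)
    (hR : R.eval a ≠ 0)
    (heq : (X - C a) * B * (derivative P * Q - P * derivative Q) = R * P^2) :
    False := by
  have hRne : R ≠ 0 := fun h => hR (by simp [h])
  have hBne : B ≠ 0 := fun h => hB (by simp [h])
  have hRHS : R * P^2 ≠ 0 := mul_ne_zero hRne (pow_ne_zero 2 hP)
  set W := derivative P * Q - P * derivative Q with hWdef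
  have hW : W ≠ 0 := by
    intro h
    rw [h, mul_zero] at heq
    exact hRHS heq.symm
  have hQ : Q ≠ 0 := by
    intro h
    apply hW
    simp [hWdef, h]
  set m := rootMultiplicity a P with hm
  set l := rootMultiplicity a Q with hl
  -- multiplicity of both sides
  have hXa : (X - C a : ℂ[X]) ≠ 0 := X_sub_C_ne_zero a
  have hmultL : rootMultiplicity a ((X - C a) * B * W) = 1 + rootMultiplicity a W := by
    rw [rootMultiplicity_mul (mul_ne_zero (mul_ne_zero hXa hBne) hW),
        rootMultiplicity_mul (mul_ne_zero hXa hBne),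
        rootMultiplicity_X_sub_C_self,
        rootMultiplicity_eq_zero (by simpa [IsRoot] using hB)]
  have hmultR : rootMultiplicity a (R * P^2) = 2 * m := by
    rw [rootMultiplicity_mul hRHS,
        rootMultiplicity_eq_zero (by simpa [IsRoot] using hR), sq,
        rootMultiplicity_mul (mul_ne_zero hP hP), zero_add, ← hm]
    ring
  have hkey : 1 + rootMultiplicity a W = 2 * m := by
    rw [← hmultL, ← hmultR, heq]
  -- factor P and Q
  set S := P /ₘ (X - C a)^m with hS
  set T := Q /ₘ (X - C a)^l with hT
  have hPfac : (X - C a)^m * S = P := P.pow_mul_divByMonic_rootMultiplicity_eq a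
  have hQfac : (X - C a)^l * T = Q := Q.pow_mul_divByMonic_rootMultiplicity_eq a
  have hSa : S.eval a ≠ 0 := eval_divByMonic_pow_rootMultiplicity_ne_zero a hP
  have hTa : T.eval a ≠ 0 := eval_divByMonic_pow_rootMultiplicity_ne_zero a hQ
  set BB := (C (m:ℂ) - C (l:ℂ)) * (S * T)
      + (X - C a) * (derivative S * T - S * derivative T) with hBB
  have hfac : (X - C a) * W = (X - C a)^(m+l) * BB := by
    have h1 := aux_deriv_pow_mul a m S
    have h2 := aux_deriv_pow_mul a l T
    calc (X - C a) * W
        = ((X - C a) * derivative ((X - C a)^m * S)) * ((X - C a)^l * T)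
          - ((X - C a)^m * S) * ((X - C a) * derivative ((X - C a)^l * T)) := by
          rw [hWdef, hPfac, hQfac]; ring
      _ = (C (m:ℂ) * ((X - C a)^m * S) + (X - C a)^(m+1) * derivative S) * ((X - C a)^l * T)
          - ((X - C a)^m * S) * (C (l:ℂ) * ((X - C a)^l * T) + (X - C a)^(l+1) * derivative T) := by
          rw [h1, h2]
      _ = (X - C a)^(m+l) * BB := by rw [hBB]; ring
  by_cases hml : m = l
  · -- then BB = (X-C a) * D and multiplicity too large
    have hBB' : BB = (X - C a) * (derivative S * T - S * derivative T) := by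
      rw [hBB, hml]; ring
    rw [hBB'] at hfac
    have hD : (derivative S * T - S * derivative T) ≠ 0 := by
      intro h
      apply hW
      have : (X - C a) * W = 0 := by rw [hfac, h]; ring
      exact (mul_eq_zero.mp this).resolve_left hXa
    have : 1 + rootMultiplicity a W
        = (m + l) + (1 + rootMultiplicity a (derivative S * T - S * derivative T)) := by
      rw [← rootMultiplicity_X_sub_C_self (x := a), ← rootMultiplicity_mul (mul_ne_zero hXa hW),
          hfac]
      rw [← mul_assoc]
      rw [rootMultiplicity_mul (by
        refine mul_ne_zero (mul_ne_zero (pow_ne_zero _ hXa) hXa) hD)]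
      rw [rootMultiplicity_mul (mul_ne_zero (pow_ne_zero _ hXa) hXa)]
      rw [rootMultiplicity_X_sub_C_pow, rootMultiplicity_X_sub_C_self]; omega
    omega
  · -- BB has nonzero value at a
    have hBBa : BB.eval a ≠ 0 := by
      rw [hBB]
      simp only [eval_add, eval_mul, eval_sub, eval_C, eval_X, sub_self, zero_mul, add_zero]
      refine mul_ne_zero ?_ (mul_ne_zero hSa hTa)
      intro h
      apply hml
      exact_mod_cast sub_eq_zero.mp h
    have hBBne : BB ≠ 0 := fun h => hBBa (by simp [h])
    have : 1 + rootMultiplicity a W = (m + l) + 0 := by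
      rw [← rootMultiplicity_X_sub_C_self (x := a), ← rootMultiplicity_mul (mul_ne_zero hXa hW),
          hfac, rootMultiplicity_mul (mul_ne_zero (pow_ne_zero _ hXa) hBBne),
          rootMultiplicity_X_sub_C_pow, rootMultiplicity_eq_zero (by simpa [IsRoot] using hBBa)]
    omega


lemma main_poly {n : ℕ} (a : Fin n → ℂ) (ha : Function.Injective a)
    (lam : Fin n → ℂ) (hlam : ∀ i, lam i ≠ 0)
    (V : Set ℂ) (hVo : IsOpen V) (hVa : ∀ i, ∀ z ∈ V, z ≠ a i)
    (L : List (Fin n) → ℂ → ℂ)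
    (hL1 : ∀ z ∈ V, L [] z = 1)
    (hLd : ∀ (i : Fin n) (u : List (Fin n)), ∀ z ∈ V,
      HasDerivAt (L (i :: u)) (lam i / (z - a i) * L u z) z)
    (U : Set ℂ) (hUo : IsOpen U) (hUne : U.Nonempty) (hUV : U ⊆ V) :
    ∀ (N : ℕ) (S : Finset (List (Fin n))) (p : List (Fin n) → ℂ[X]),
      (∀ w ∈ S, w.length ≤ N) → (∀ w ∉ S, p w = 0) →
      (∀ z ∈ U, ∑ w ∈ S, (p w).eval z * L w z = 0) → ∀ w, p w = 0 := by
  classical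
  intro N
  induction N with
  | zero =>
    intro S p hS hsupp hrel w
    by_cases hw : w ∈ S
    · have hwnil : w = [] := List.length_eq_zero_iff.mp (Nat.le_zero.mp (hS w hw))
      subst hwnil
      have hSsub : S = {[]} := by
        apply Finset.eq_singleton_iff_unique_mem.mpr
        exact ⟨hw, fun x hx => List.length_eq_zero_iff.mp (Nat.le_zero.mp (hS x hx))⟩
      apply aux_poly_eq_zero_of_open hUo hUne
      intro z hz
      have h0 := hrel z hz
      rw [hSsub, Finset.sum_singleton, hL1 z (hUV hz), mul_one] at h0
      exact h0
    · exact hsupp w hw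
  | succ N IH =>
    have Hempty : ∀ (S : Finset (List (Fin n))) (p : List (Fin n) → ℂ[X]),
        (∀ w ∈ S, w.length ≤ N+1) → (∀ w ∉ S, p w = 0) →
        (∀ z ∈ U, ∑ w ∈ S, (p w).eval z * L w z = 0) →
        (S.filter (fun w => w.length = N+1 ∧ p w ≠ 0)) = ∅ → ∀ w, p w = 0 := by
      intro S p hS hsupp hrel hfil
      have htop : ∀ w ∈ S, w.length = N+1 → p w = 0 := by
        intro w hw hlen
        by_contra hne
        have : w ∈ S.filter (fun w => w.length = N+1 ∧ p w ≠ 0) :=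
          Finset.mem_filter.mpr ⟨hw, hlen, hne⟩
        rw [hfil] at this
        exact absurd this (Finset.notMem_empty w)
      apply IH (S.filter (fun w => w.length ≤ N)) p
      · intro w hw; exact (Finset.mem_filter.mp hw).2
      · intro w hw
        by_cases hwS : w ∈ S
        · have : ¬ w.length ≤ N := fun h => hw (Finset.mem_filter.mpr ⟨hwS, h⟩)
          exact htop w hwS (by have := hS w hwS; omega)
        · exact hsupp w hwS
      · intro z hz
        rw [Finset.sum_subset (Finset.filter_subset _ S)]
        · exact hrel z hz
        · intro x hx hxn
          have : ¬ x.length ≤ N := fun h => hxn (Finset.mem_filter.mpr ⟨hx, h⟩)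
          rw [htop x hx (by have := hS x hx; omega)]
          simp
    suffices KEY : ∀ (k : ℕ) (S : Finset (List (Fin n))) (p : List (Fin n) → ℂ[X]),
        (∀ w ∈ S, w.length ≤ N+1) → (∀ w ∉ S, p w = 0) →
        (∀ z ∈ U, ∑ w ∈ S, (p w).eval z * L w z = 0) →
        (S.filter (fun w => w.length = N+1 ∧ p w ≠ 0)).card ≤ k → ∀ w, p w = 0 by
      intro S p hS hsupp hrel
      exact KEY _ S p hS hsupp hrel le_rfl
    intro k
    induction k with
    | zero =>
      intro S p hS hsupp hrel hcard
      exact Hempty S p hS hsupp hrel (Finset.card_eq_zero.mp (Nat.le_zero.mp hcard))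
    | succ k IHk =>
      intro S p hS hsupp hrel hcard
      by_cases hne : (S.filter (fun w => w.length = N+1 ∧ p w ≠ 0)).Nonempty
      rotate_left
      · exact Hempty S p hS hsupp hrel (Finset.not_nonempty_iff_eq_empty.mp hne)
      obtain ⟨w0, hw0f⟩ := hne
      rw [Finset.mem_filter] at hw0f
      obtain ⟨hw0S, hw0len, hw0ne⟩ := hw0f
      exfalso
      rcases w0 with _ | ⟨j, u0⟩
      · simp at hw0len
      -- setup
      set A : ℂ[X] := ∏ i, (X - C (a i)) with hA
      set Ai : Fin n → ℂ[X] := fun i => ∏ i' ∈ Finset.univ.erase i, (X - C (a i')) with hAi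
      have hAfac : ∀ i, A = (X - C (a i)) * Ai i := fun i =>
        (Finset.mul_prod_erase _ _ (Finset.mem_univ i)).symm
      have hAne : A ≠ 0 := Finset.prod_ne_zero_iff.mpr fun i _ => X_sub_C_ne_zero (a i)
      set Dp : List (Fin n) → ℂ[X] := fun u =>
        A * derivative (p u) + ∑ i, C (lam i) * Ai i * p (i :: u) with hDp
      set q : List (Fin n) → ℂ[X] := fun u =>
        p (j::u0) * Dp u - (A * derivative (p (j::u0))) * p u with hq
      set S' := S ∪ S.image List.tail with hS'def
      have hSsub : S ⊆ S' := Finset.subset_union_left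
      have hconsS' : ∀ (i : Fin n) u, (i :: u) ∈ S → u ∈ S' := fun i u h =>
        Finset.mem_union.mpr (Or.inr (Finset.mem_image.mpr ⟨i::u, h, rfl⟩))
      have hS'len : ∀ w ∈ S', w.length ≤ N+1 := by
        intro w hw
        rcases Finset.mem_union.mp hw with h | h
        · exact hS w h
        · obtain ⟨w', hw', rfl⟩ := Finset.mem_image.mp h
          have h1 := hS w' hw'
          have h2 : w'.tail.length = w'.length - 1 := List.length_tail
          omega
      have hsupp' : ∀ u ∉ S', q u = 0 := by
        intro u hu
        have huS : u ∉ S := fun h => hu (hSsub h)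
        have hpu : p u = 0 := hsupp u huS
        have hpc : ∀ i, p (i :: u) = 0 := fun i => hsupp _ (fun h => hu (hconsS' i u h))
        simp [hq, hDp, hpu, hpc]
      have hconsN : ∀ (i : Fin n) (u : List (Fin n)), u.length = N+1 → p (i :: u) = 0 := by
        intro i u hlen
        apply hsupp
        intro h
        have := hS _ h
        simp only [List.length_cons] at this
        omega
      have hqtop : ∀ u, u.length = N+1 →
          q u = A * (p (j::u0) * derivative (p u) - derivative (p (j::u0)) * p u) := by
        intro u hu
        have h0 : ∀ i, p (i :: u) = 0 := fun i => hconsN i u hu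
        simp only [hq, hDp, h0, mul_zero, Finset.sum_const_zero, add_zero]
        ring
      have hqw0 : q (j::u0) = 0 := by
        rw [hqtop _ hw0len]; ring
      -- the analytic core
      have hDrel : ∀ z ∈ U, ∑ u ∈ S', (Dp u).eval z * L u z = 0 := by
        intro z hz
        have hzV : z ∈ V := hUV hz
        set G : List (Fin n) → ℂ := fun w => match w with
          | [] => 0
          | i :: u => lam i / (z - a i) * L u z with hG
        set gg : List (Fin n) → ℂ := fun w => match w with
          | [] => 0
          | i :: u => (C (lam i) * Ai i * p (i :: u)).eval z * L u z with hgg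
        have hterm : ∀ w ∈ S, HasDerivAt (fun y => (p w).eval y * L w y)
            ((derivative (p w)).eval z * L w z + (p w).eval z * G w) z := by
          intro w _
          have h1 : HasDerivAt (fun y => (p w).eval y) ((derivative (p w)).eval z) z :=
            (p w).hasDerivAt z
          have h2 : HasDerivAt (L w) (G w) z := by
            cases w with
            | nil =>
              have hev : L [] =ᶠ[nhds z] fun _ => (1:ℂ) := by
                filter_upwards [hVo.mem_nhds hzV] with y hy using hL1 y hy
              exact (hasDerivAt_const z (1:ℂ)).congr_of_eventuallyEq hev
            | cons i u => exact hLd i u z hzV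
          exact h1.mul h2
        have hE0 : HasDerivAt (fun y => ∑ w ∈ S, (p w).eval y * L w y) 0 z := by
          have hev : (fun y => ∑ w ∈ S, (p w).eval y * L w y) =ᶠ[nhds z] fun _ => (0:ℂ) := by
            filter_upwards [hUo.mem_nhds hz] with y hy using hrel y hy
          exact (hasDerivAt_const z (0:ℂ)).congr_of_eventuallyEq hev
        have hzero : ∑ w ∈ S, ((derivative (p w)).eval z * L w z + (p w).eval z * G w) = 0 :=
          (HasDerivAt.fun_sum hterm).unique hE0
        have hAG : ∀ w, A.eval z * ((p w).eval z * G w) = gg w := by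
          intro w
          cases w with
          | nil => simp [hG, hgg]
          | cons i u =>
            have hzi : z - a i ≠ 0 := sub_ne_zero.mpr (hVa i z hzV)
            have hAz : A.eval z = (z - a i) * (Ai i).eval z := by
              rw [hAfac i]; simp [eval_mul]
            show A.eval z * ((p (i::u)).eval z * (lam i / (z - a i) * L u z))
              = (C (lam i) * Ai i * p (i :: u)).eval z * L u z
            rw [hAz]
            simp only [eval_mul, eval_C]
            field_simp
        have hmain : ∑ w ∈ S, ((A * derivative (p w)).eval z * L w z) + ∑ w ∈ S, gg w = 0 := by
          have h0 := congrArg (fun t => A.eval z * t) hzero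
          simp only [mul_zero] at h0
          rw [Finset.mul_sum] at h0
          rw [← Finset.sum_add_distrib, ← h0]
          apply Finset.sum_congr rfl
          intro w _
          rw [← hAG w]
          simp only [eval_mul]
          ring
        set I : Finset (List (Fin n)) :=
          (S' ×ˢ (Finset.univ : Finset (Fin n))).image (fun ui => ui.2 :: ui.1) with hI
        have hggzero : ∀ x ∉ S, gg x = 0 := by
          intro x hx
          cases x with
          | nil => simp [hgg]
          | cons i u =>
            show (C (lam i) * Ai i * p (i :: u)).eval z * L u z = 0
            rw [hsupp _ hx]
            simp
        have h1 : ∑ w ∈ S, gg w = ∑ w ∈ S ∪ I, gg w :=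
          Finset.sum_subset Finset.subset_union_left (fun x _ hxS => hggzero x hxS)
        have h2 : ∑ w ∈ I, gg w = ∑ w ∈ S ∪ I, gg w := by
          apply Finset.sum_subset Finset.subset_union_right
          intro x hx hxI
          cases x with
          | nil => simp [hgg]
          | cons i u =>
            rcases Finset.mem_union.mp hx with h | h
            · exact absurd (Finset.mem_image.mpr ⟨(u, i),
                Finset.mem_product.mpr ⟨hconsS' i u h, Finset.mem_univ i⟩, rfl⟩) hxI
            · exact absurd h hxI
        have hIsum : ∑ w ∈ I, gg w = ∑ u ∈ S', ∑ i : Fin n, gg (i :: u) := by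
          rw [hI, Finset.sum_image, Finset.sum_product]
          rintro ⟨u, i⟩ - ⟨u', i'⟩ - hcons
          simp only [List.cons.injEq] at hcons
          exact Prod.ext hcons.2 hcons.1
        have hDpterm : ∀ u, (Dp u).eval z * L u z
            = (A * derivative (p u)).eval z * L u z + ∑ i : Fin n, gg (i :: u) := by
          intro u
          simp only [hDp, eval_add, eval_finset_sum, add_mul, Finset.sum_mul]
          rfl
        calc ∑ u ∈ S', (Dp u).eval z * L u z
            = ∑ u ∈ S', ((A * derivative (p u)).eval z * L u z)
              + ∑ u ∈ S', ∑ i : Fin n, gg (i :: u) := by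
              rw [← Finset.sum_add_distrib]
              exact Finset.sum_congr rfl fun u _ => hDpterm u
          _ = ∑ w ∈ S, ((A * derivative (p w)).eval z * L w z) + ∑ w ∈ S, gg w := by
              rw [h1, ← h2, hIsum]
              congr 1
              exact (Finset.sum_subset hSsub (fun x _ hxS => by rw [hsupp x hxS]; simp)).symm
          _ = 0 := hmain
      have hqrel : ∀ z ∈ U, ∑ u ∈ S', (q u).eval z * L u z = 0 := by
        intro z hz
        have h1 := hDrel z hz
        have h2 : ∑ u ∈ S', (p u).eval z * L u z = 0 := by
          rw [← Finset.sum_subset hSsub (fun x _ hxn => by rw [hsupp x hxn]; simp)]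
          exact hrel z hz
        have h3 : ∑ u ∈ S', (q u).eval z * L u z
            = (p (j::u0)).eval z * (∑ u ∈ S', (Dp u).eval z * L u z)
              - (A * derivative (p (j::u0))).eval z * (∑ u ∈ S', (p u).eval z * L u z) := by
          rw [Finset.mul_sum, Finset.mul_sum, ← Finset.sum_sub_distrib]
          apply Finset.sum_congr rfl
          intro u hu
          simp only [hq, eval_sub, eval_mul]
          ring
        rw [h3, h1, h2]; ring
      have hqcard : (S'.filter (fun w => w.length = N+1 ∧ q w ≠ 0)).card ≤ k := by
        have hsub : (S'.filter (fun w => w.length = N+1 ∧ q w ≠ 0))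
            ⊆ (S.filter (fun w => w.length = N+1 ∧ p w ≠ 0)).erase (j::u0) := by
          intro u hu
          rw [Finset.mem_filter] at hu
          obtain ⟨huS', hulen, huq⟩ := hu
          have huS : u ∈ S := by
            rcases Finset.mem_union.mp huS' with h | h
            · exact h
            · exfalso
              obtain ⟨w', hw', rfl⟩ := Finset.mem_image.mp h
              have h1 := hS w' hw'
              have h2 : w'.tail.length = w'.length - 1 := List.length_tail
              omega
          have hune : u ≠ j::u0 := by
            intro h; rw [h] at huq; exact huq hqw0
          have hpune : p u ≠ 0 := by
            intro h
            apply huq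
            rw [hqtop u hulen, h]
            simp
          exact Finset.mem_erase.mpr ⟨hune, Finset.mem_filter.mpr ⟨huS, hulen, hpune⟩⟩
        have hw0mem : (j::u0) ∈ S.filter (fun w => w.length = N+1 ∧ p w ≠ 0) :=
          Finset.mem_filter.mpr ⟨hw0S, hw0len, hw0ne⟩
        have h1 := Finset.card_le_card hsub
        rw [Finset.card_erase_of_mem hw0mem] at h1
        have h2 : 0 < (S.filter (fun w => w.length = N+1 ∧ p w ≠ 0)).card :=
          Finset.card_pos.mpr ⟨_, hw0mem⟩
        omega
      have hqzero : ∀ u, q u = 0 := IHk S' q hS'len hsupp' hqrel hqcard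
      -- Wronskian step
      have hprop : ∀ u, u.length = N+1 → ∃ c : ℂ, p u = C c * p (j::u0) := by
        intro u hulen
        by_cases huS : u ∈ S
        · have h0 := hqzero u
          rw [hqtop u hulen] at h0
          have h1 := (mul_eq_zero.mp h0).resolve_left hAne
          have hwr : p (j::u0) * derivative (p u) = derivative (p (j::u0)) * p u := by
            linear_combination h1
          exact aux_wronskian hw0ne hwr
        · exact ⟨0, by simp [hsupp u huS]⟩
      have hlenu0 : u0.length = N := by
        simp only [List.length_cons] at hw0len; omega
      have hcons_len : ∀ i : Fin n, (i::u0 : List (Fin n)).length = N+1 := by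
        intro i; simp [hlenu0]
      have hc : ∀ i : Fin n, p (i::u0) = C ((hprop (i::u0) (hcons_len i)).choose) * p (j::u0) :=
        fun i => (hprop (i::u0) (hcons_len i)).choose_spec
      set c : Fin n → ℂ := fun i => (hprop (i::u0) (hcons_len i)).choose with hcdef
      have hcj : c j = 1 := by
        have h1 := hc j
        have h2 : (C (c j) - 1) * p (j::u0) = 0 := by linear_combination - h1
        have h3 : C (c j) - 1 = 0 := (mul_eq_zero.mp h2).resolve_right hw0ne
        have h4 : C (c j) = C (1:ℂ) := by rw [C_1]; linear_combination h3
        exact C_injective h4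
      set R : ℂ[X] := ∑ i, C (lam i * c i) * Ai i with hR
      have hsum : (∑ i, C (lam i) * Ai i * p (i :: u0)) = R * p (j::u0) := by
        rw [hR, Finset.sum_mul]
        apply Finset.sum_congr rfl
        intro i _
        rw [hc i, C_mul]
        ring
      have hqu0 : p (j::u0) * (A * derivative (p u0) + R * p (j::u0))
          - A * derivative (p (j::u0)) * p u0 = 0 := by
        have h0 := hqzero u0
        simp only [hq, hDp] at h0
        rw [hsum] at h0
        linear_combination h0
      have heq : (X - C (a j)) * (Ai j) *
          (derivative (p (j::u0)) * p u0 - p (j::u0) * derivative (p u0))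
          = R * (p (j::u0))^2 := by
        linear_combination (-1 : ℂ[X]) * hqu0
          - (derivative (p (j::u0)) * p u0 - p (j::u0) * derivative (p u0)) * (hAfac j)
      have hAijeval : (Ai j).eval (a j) ≠ 0 := by
        rw [hAi]
        simp only [eval_prod, eval_sub, eval_X, eval_C]
        apply Finset.prod_ne_zero_iff.mpr
        intro i' hi'
        exact sub_ne_zero.mpr (fun h => (Finset.mem_erase.mp hi').1 (ha h.symm))
      have hReval : R.eval (a j) ≠ 0 := by
        rw [hR]
        rw [eval_finset_sum]
        rw [Finset.sum_eq_single j]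
        · simp only [eval_mul, eval_C]
          rw [hcj, mul_one]
          exact mul_ne_zero (hlam j) hAijeval
        · intro i _ hij
          simp only [eval_mul, eval_C]
          apply mul_eq_zero_of_right
          rw [hAi]
          simp only [eval_prod]
          apply Finset.prod_eq_zero (Finset.mem_erase.mpr ⟨Ne.symm hij , Finset.mem_univ j⟩)
          simp
        · intro h; exact absurd (Finset.mem_univ j) h
      exact aux_key (a j) (Ai j) (p (j::u0)) (p u0) R hAijeval hw0ne hReval heq

end HyperlogAux

open Polynomial

/-- **Theorem 2 (linear independence of hyperlogarithms over the rational
functions).**  Let `a_1,…,a_n` be distinct points of `ℂ`, `λ_1,…,λ_n` nonzero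
complex numbers, and `V` a nonempty connected simply connected open subset of
`ℂ ∖ {a_1,…,a_n}`.  Let `(L_w)_{w∈X*}` be a family of analytic functions on
`V`, indexed by words over the `n`-letter alphabet, with `L_1 ≡ 1` and
`L_{x_i u}'(z) = (λ_i/(z−a_i))·L_u(z)` on `V`.  If `(f_w)` is a finitely
supported family of rational functions such that `Σ_w f_w(z)·L_w(z) = 0` on a
nonempty open `U ⊆ V` avoiding the poles of all `f_w`, then every `f_w = 0`. -/
theorem hyperlog_linear_independence_over_ratfunc
    {n : ℕ} (a : Fin n → ℂ) (ha : Function.Injective a)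
    (lam : Fin n → ℂ) (hlam : ∀ i, lam i ≠ 0)
    (V : Set ℂ) (hVo : IsOpen V) (hVc : IsConnected V)
    (hVsc : SimplyConnectedSpace V)
    (hVa : ∀ i, ∀ z ∈ V, z ≠ a i)
    (L : List (Fin n) → ℂ → ℂ)
    (hLa : ∀ w, AnalyticOnNhd ℂ (L w) V)
    (hL1 : ∀ z ∈ V, L [] z = 1)
    (hLd : ∀ (i : Fin n) (u : List (Fin n)), ∀ z ∈ V,
      HasDerivAt (L (i :: u)) (lam i / (z - a i) * L u z) z)
    (f : List (Fin n) →₀ RatFunc ℂ)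
    (U : Set ℂ) (hUo : IsOpen U) (hUne : U.Nonempty) (hUV : U ⊆ V)
    (hpoles : ∀ w, ∀ z ∈ U, Polynomial.eval z (f w).denom ≠ 0)
    (hrel : ∀ z ∈ U,
      (f.sum fun w r => RatFunc.eval (RingHom.id ℂ) z r * L w z) = 0) :
    f = 0 := by
  classical
  set S := f.support with hSdef
  set p : List (Fin n) → ℂ[X] := fun w => (f w).num * ∏ w' ∈ S.erase w, (f w').denom with hp
  have hall : ∀ w, p w = 0 := by
    apply main_poly a ha lam hlam V hVo hVa L hL1 hLd U hUo hUne hUV (S.sup List.length) S p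
    · intro w hw; exact Finset.le_sup hw
    · intro w hw
      have h0 : f w = 0 := Finsupp.notMem_support_iff.mp hw
      simp [hp, h0]
    · intro z hz
      have hrel' := hrel z hz
      rw [Finsupp.sum] at hrel'
      have hkey : ∑ w ∈ S, (p w).eval z * L w z
          = (∏ w' ∈ S, Polynomial.eval z (f w').denom)
            * ∑ w ∈ S, RatFunc.eval (RingHom.id ℂ) z (f w) * L w z := by
        rw [Finset.mul_sum]
        apply Finset.sum_congr rfl
        intro w hw
        rw [hp]
        simp only [eval_mul, eval_prod]
        have hd : Polynomial.eval z (f w).denom ≠ 0 := hpoles w z hz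
        have heval : RatFunc.eval (RingHom.id ℂ) z (f w)
            = Polynomial.eval z (f w).num / Polynomial.eval z (f w).denom := by
          rw [RatFunc.eval]
          rfl
        rw [heval, ← Finset.mul_prod_erase _ (fun w' => Polynomial.eval z (f w').denom) hw]
        field_simp
      rw [hkey, hrel', mul_zero]
  apply Finsupp.ext
  intro w
  by_cases hw : w ∈ S
  · have h0 := hall w
    rw [hp] at h0
    have hprod : (∏ w' ∈ S.erase w, (f w').denom) ≠ 0 :=
      Finset.prod_ne_zero_iff.mpr fun w' _ => RatFunc.denom_ne_zero _
    have hnum : (f w).num = 0 := (mul_eq_zero.mp h0).resolve_right hprod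
    simpa using RatFunc.num_eq_zero_iff.mp hnum
  · simpa using Finsupp.notMem_support_iff.mp hw
end

section
/- Let a_1,…,a_n be distinct complex numbers and c_1,…,c_n complex numbers. Suppose f is a rational function in ℂ(z) and U is a nonempty open subset of ℂ avoiding a_1,…,a_n and the poles of f such that f'(z) = Σ_{i=1}^n c_i/(z−a_i) for all z ∈ U. Then c_i = 0 for all i (equivalently: no nonzero ℂ-linear combination of the simple-pole functions 1/(z−a_i) admits a rational primitive). -/
open Metric Set Polynomial Complex


/-- **No rational primitive for a linear combination of simple poles.**
Let `a_1,…,a_n` be distinct complex numbers and `c_1,…,c_n ∈ ℂ`.  If `f` is a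
rational function in `ℂ(z)` whose (complex) derivative satisfies
`f'(z) = Σ_{i=1}^n c_i/(z−a_i)` on a nonempty open set `U` avoiding the points
`a_i` and the poles of `f`, then all `c_i = 0`.  Equivalently, no nonzero
`ℂ`-linear combination of the functions `1/(z−a_i)` admits a rational
primitive. -/
theorem no_rational_primitive_of_simple_poles
    {n : ℕ} (a : Fin n → ℂ) (ha : Function.Injective a)
    (c : Fin n → ℂ) (f : RatFunc ℂ)
    (U : Set ℂ) (hUo : IsOpen U) (hUne : U.Nonempty)
    (hUa : ∀ i, ∀ z ∈ U, z ≠ a i)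
    (hUf : ∀ z ∈ U, Polynomial.eval z f.denom ≠ 0)
    (hderiv : ∀ z ∈ U,
      HasDerivAt (fun w => RatFunc.eval (RingHom.id ℂ) w f)
        (∑ i, c i / (z - a i)) z) :
    ∀ i, c i = 0 := by
  classical
  set G : ℂ → ℂ := fun w => Polynomial.eval w f.num / Polynomial.eval w f.denom with hG
  have hFG : (fun w => RatFunc.eval (RingHom.id ℂ) w f) = G := by
    funext w
    simp only [RatFunc.eval, hG]
    rw [Polynomial.eval₂_eq_eval_map, Polynomial.eval₂_eq_eval_map, Polynomial.map_id,
      Polynomial.map_id]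
  set g : ℂ → ℂ := fun z => ∑ i, c i / (z - a i) with hg
  set S : Set ℂ := {z | Polynomial.eval z f.denom = 0} with hS
  have hSfin : S.Finite := Polynomial.finite_setOf_isRoot f.denom_ne_zero
  set T : Set ℂ := S ∪ Set.range a with hT
  have hTfin : T.Finite := hSfin.union (Set.finite_range a)
  set Ω : Set ℂ := Tᶜ with hΩ
  have hUΩ : U ⊆ Ω := by
    intro z hz
    simp only [hΩ, hT, Set.mem_compl_iff, Set.mem_union, not_or, Set.mem_range, hS,
      Set.mem_setOf_eq]
    refine ⟨hUf z hz, ?_⟩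
    rintro ⟨i, rfl⟩
    exact hUa i _ hz rfl
  have hGd : ∀ z ∉ S, DifferentiableAt ℂ G z := by
    intro z hz
    exact (f.num.differentiableAt).div (f.denom.differentiableAt) hz
  have hSco : IsOpen Sᶜ := hSfin.isClosed.isOpen_compl
  have hGdon : DifferentiableOn ℂ G Sᶜ := fun z hz => (hGd z hz).differentiableWithinAt
  have hGan : AnalyticOnNhd ℂ (deriv G) Sᶜ := (hGdon.analyticOnNhd hSco).deriv
  have hgd : ∀ z ∉ Set.range a, DifferentiableAt ℂ g z := by
    intro z hz
    apply DifferentiableAt.fun_sum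
    intro i _
    have hne : z - a i ≠ 0 := sub_ne_zero.2 fun h => hz ⟨i, h.symm⟩
    exact (differentiableAt_const _).div ((differentiableAt_id).sub (differentiableAt_const _)) hne
  have hgdon : DifferentiableOn ℂ g (Set.range a)ᶜ :=
    fun z hz => (hgd z hz).differentiableWithinAt
  have hgan : AnalyticOnNhd ℂ g (Set.range a)ᶜ :=
    hgdon.analyticOnNhd (Set.finite_range a).isClosed.isOpen_compl
  have hΩpre : IsPreconnected Ω := by
    have h2 : (1 : Cardinal) < Module.rank ℝ ℂ := by
      rw [Complex.rank_real_complex]; norm_num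
    exact (hTfin.countable.isConnected_compl_of_one_lt_rank h2).isPreconnected
  have hΩS : Ω ⊆ Sᶜ := Set.compl_subset_compl.2 Set.subset_union_left
  have hΩa : Ω ⊆ (Set.range a)ᶜ := Set.compl_subset_compl.2 Set.subset_union_right
  obtain ⟨z₀, hz₀⟩ := hUne
  have hEqU : Set.EqOn (deriv G) g U := by
    intro z hz
    have h := hderiv z hz
    rw [hFG] at h
    exact h.deriv
  have hEq : Set.EqOn (deriv G) g Ω :=
    AnalyticOnNhd.eqOn_of_preconnected_of_eventuallyEq (hGan.mono hΩS) (hgan.mono hΩa)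
      hΩpre (hUΩ hz₀) (Filter.eventuallyEq_of_mem (hUo.mem_nhds hz₀) hEqU)
  intro i
  set T' : Set ℂ := T \ {a i} with hT'
  have hT'closed : IsClosed T' := (hTfin.diff).isClosed
  have hai : a i ∈ T'ᶜ := by simp [hT']
  obtain ⟨r, hr, hball⟩ := (Metric.nhds_basis_closedBall.mem_iff).1
    (hT'closed.isOpen_compl.mem_nhds hai)
  have hsphΩ : sphere (a i) r ⊆ Ω := by
    intro z hz
    have hzT' : z ∉ T' := hball (sphere_subset_closedBall hz)
    have hzne : z ≠ a i := by
      intro h; rw [mem_sphere, h, dist_self] at hz; exact hr.ne hz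
    intro hzT
    exact hzT' ⟨hzT, hzne⟩
  have h1 : (∮ z in C(a i, r), deriv G z) = 0 :=
    circleIntegral.integral_eq_zero_of_hasDerivWithinAt hr.le (fun z hz =>
      ((hGd z (hΩS (hsphΩ hz))).hasDerivAt).hasDerivWithinAt)
  have h2 : (∮ z in C(a i, r), g z) = 0 := by
    rw [← h1]
    exact circleIntegral.integral_congr hr.le (fun z hz => (hEq (hsphΩ hz)).symm)
  set rest : ℂ → ℂ := fun z => ∑ j ∈ Finset.univ.erase i, c j / (z - a j) with hrest
  have haj : ∀ j ∈ Finset.univ.erase i, ∀ z ∈ closedBall (a i) r, z - a j ≠ 0 := by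
    intro j hj z hz h
    have hji : j ≠ i := Finset.ne_of_mem_erase hj
    have hmem : a j ∈ T' := ⟨Or.inr ⟨j, rfl⟩, by simp [ha.ne hji]⟩
    exact (hball hz) (sub_eq_zero.1 h ▸ hmem)
  have hrestd : ∀ z ∈ closedBall (a i) r, DifferentiableAt ℂ rest z := by
    intro z hz
    apply DifferentiableAt.fun_sum
    intro j hj
    exact (differentiableAt_const _).div ((differentiableAt_id).sub (differentiableAt_const _))
      (haj j hj z hz)
  have h3 : (∮ z in C(a i, r), rest z) = 0 :=
    Complex.circleIntegral_eq_zero_of_differentiable_on_off_countable hr.le countable_empty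
      (fun z hz => (hrestd z hz).continuousAt.continuousWithinAt)
      (fun z hz => hrestd z (ball_subset_closedBall hz.1))
  have hgint : CircleIntegrable g (a i) r :=
    (ContinuousOn.circleIntegrable hr.le (fun z hz =>
      (hgd z (hΩa (hsphΩ hz))).continuousAt.continuousWithinAt))
  have hrint : CircleIntegrable rest (a i) r :=
    (ContinuousOn.circleIntegrable hr.le (fun z hz =>
      (hrestd z (sphere_subset_closedBall hz)).continuousAt.continuousWithinAt))
  have h4 : (∮ z in C(a i, r), (g z - rest z)) = 0 := by
    rw [circleIntegral.integral_sub hgint hrint, h2, h3, sub_zero]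
  have h5 : ∀ z : ℂ, g z - rest z = c i * (z - a i)⁻¹ := by
    intro z
    have := Finset.add_sum_erase Finset.univ (fun j => c j / (z - a j)) (Finset.mem_univ i)
    simp only [hg, hrest]
    rw [← this]
    ring
  have h6 : (∮ z in C(a i, r), (g z - rest z)) = c i * (2 * Real.pi * Complex.I) := by
    calc (∮ z in C(a i, r), (g z - rest z)) = ∮ z in C(a i, r), c i * (z - a i)⁻¹ :=
          circleIntegral.integral_congr hr.le (fun z _ => h5 z)
      _ = c i * ∮ z in C(a i, r), (z - a i)⁻¹ := circleIntegral.integral_const_mul _ _ _ _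
      _ = c i * (2 * Real.pi * Complex.I) := by
          rw [circleIntegral.integral_sub_inv_of_mem_ball (mem_ball_self hr)]
  have : c i * (2 * Real.pi * Complex.I) = 0 := by rw [← h6, h4]
  have h2pi : (2 * Real.pi * Complex.I : ℂ) ≠ 0 := by
    simp [Real.pi_ne_zero, Complex.I_ne_zero]
  exact (mul_eq_zero.1 this).resolve_right h2pi
end

section
/- Let V = ℂ ∖ ((−∞,0] ∪ [1,+∞)) and let X = {x_0, x_1}. Let (L_w)_{w∈X*} be the family of polylogarithmic functions: analytic functions L_w : V → ℂ with L_1 ≡ 1 and, for every word u ∈ X*, L_{x_0 u}'(z) = L_u(z)/z and L_{x_1 u}'(z) = L_u(z)/(1−z) for all z ∈ V. Then the family (L_w)_{w∈X*} is linearly independent over the field ℂ(z) of rational functions: if (f_w) is a finitely supported family of rational functions with Σ_w f_w(z)·L_w(z) = 0 for all z in some nonempty open subset of V avoiding the poles of all f_w, then every f_w = 0. -/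
open Polynomial

namespace PolylogAux

noncomputable section

/-! ### Evaluation of rational functions -/

/-- Evaluation of a rational function. -/
def ev (r : RatFunc ℂ) (z : ℂ) : ℂ := r.num.eval z / r.denom.eval z

lemma ev_eq_eval (r : RatFunc ℂ) (z : ℂ) : RatFunc.eval (RingHom.id ℂ) z r = ev r z := rfl

lemma ev_zero (z : ℂ) : ev 0 z = 0 := by simp [ev]

/-- `Good z r` : the denominator of `r` does not vanish at `z`. -/
def Good (z : ℂ) (r : RatFunc ℂ) : Prop := r.denom.eval z ≠ 0

lemma good_of_dvd {z : ℂ} {r : RatFunc ℂ} {q : ℂ[X]} (hd : r.denom ∣ q) (hq : q.eval z ≠ 0) :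
    Good z r := by
  obtain ⟨e, he⟩ := hd
  intro h0
  apply hq
  rw [he, eval_mul, h0, zero_mul]

lemma Good.add {z : ℂ} {r s : RatFunc ℂ} (hr : Good z r) (hs : Good z s) : Good z (r + s) :=
  good_of_dvd (RatFunc.denom_add_dvd r s) (by rw [eval_mul]; exact mul_ne_zero hr hs)

lemma Good.mul {z : ℂ} {r s : RatFunc ℂ} (hr : Good z r) (hs : Good z s) : Good z (r * s) :=
  good_of_dvd (RatFunc.denom_mul_dvd r s) (by rw [eval_mul]; exact mul_ne_zero hr hs)

lemma ev_add {z : ℂ} {r s : RatFunc ℂ} (hr : Good z r) (hs : Good z s) :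
    ev (r + s) z = ev r z + ev s z := by
  rw [← ev_eq_eval, ← ev_eq_eval, ← ev_eq_eval]
  exact RatFunc.eval_add (f := RingHom.id ℂ) (a := z) hr hs

lemma ev_mul {z : ℂ} {r s : RatFunc ℂ} (hr : Good z r) (hs : Good z s) :
    ev (r * s) z = ev r z * ev s z := by
  rw [← ev_eq_eval, ← ev_eq_eval, ← ev_eq_eval]
  exact RatFunc.eval_mul (f := RingHom.id ℂ) (a := z) hr hs

lemma ev_div (p q : ℂ[X]) {z : ℂ} (hq : q.eval z ≠ 0) :
    ev (algebraMap ℂ[X] (RatFunc ℂ) p / algebraMap ℂ[X] (RatFunc ℂ) q) z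
      = p.eval z / q.eval z := by
  have hq0 : q ≠ 0 := by rintro rfl; simp at hq
  set r := algebraMap ℂ[X] (RatFunc ℂ) p / algebraMap ℂ[X] (RatFunc ℂ) q with hr
  have hden : r.denom ∣ q := (RatFunc.denom_dvd hq0).mpr ⟨p, rfl⟩
  have hdz : r.denom.eval z ≠ 0 := good_of_dvd hden hq
  have hcross : r.num * q = p * r.denom := (RatFunc.num_mul_eq_mul_denom_iff hq0).mpr hr
  have hev := congrArg (Polynomial.eval z) hcross
  rw [eval_mul, eval_mul] at hev
  rw [ev, div_eq_div_iff hdz hq]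
  exact hev

/-! ### The derivation on `RatFunc ℂ` -/

/-- Derivative of a rational function. -/
def D (r : RatFunc ℂ) : RatFunc ℂ :=
  algebraMap ℂ[X] (RatFunc ℂ) (derivative r.num * r.denom - r.num * derivative r.denom) /
    algebraMap ℂ[X] (RatFunc ℂ) (r.denom ^ 2)

lemma D_zero : D (0 : RatFunc ℂ) = 0 := by
  simp [D]

lemma D_one : D (1 : RatFunc ℂ) = 0 := by
  simp [D, RatFunc.num_one, RatFunc.denom_one]

lemma Good.D {z : ℂ} {r : RatFunc ℂ} (hr : Good z r) : Good z (D r) := by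
  have h2 : (r.denom ^ 2 : ℂ[X]) ≠ 0 := pow_ne_zero _ r.denom_ne_zero
  refine good_of_dvd ((RatFunc.denom_dvd h2).mpr ⟨_, rfl⟩) ?_
  rw [eval_pow]
  exact pow_ne_zero _ hr

lemma hasDerivAt_ev (r : RatFunc ℂ) {z : ℂ} (h : Good z r) :
    HasDerivAt (ev r) (ev (D r) z) z := by
  have h2 : ((r.denom ^ 2 : ℂ[X])).eval z ≠ 0 := by
    rw [eval_pow]; exact pow_ne_zero _ h
  have heval : ev (D r) z = ((derivative r.num).eval z * r.denom.eval z
      - r.num.eval z * (derivative r.denom).eval z) / r.denom.eval z ^ 2 := by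
    rw [D, ev_div _ _ h2, eval_sub, eval_mul, eval_mul, eval_pow]
  rw [heval]
  exact (r.num.hasDerivAt z).div (r.denom.hasDerivAt z) h

lemma D_eq_zero {r : RatFunc ℂ} (h : D r = 0) : ∃ c, r = RatFunc.C c := by
  have h2 : (r.denom ^ 2 : ℂ[X]) ≠ 0 := pow_ne_zero _ r.denom_ne_zero
  have hnum : derivative r.num * r.denom - r.num * derivative r.denom = 0 := by
    by_contra hne
    exact (div_eq_zero_iff.mp h).elim
      (fun hh => RatFunc.algebraMap_ne_zero hne hh)
      (fun hh => RatFunc.algebraMap_ne_zero h2 hh)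
  have heq : derivative r.num * r.denom = r.num * derivative r.denom := by
    linear_combination hnum
  have hdvd : r.denom ∣ derivative r.denom := by
    refine (RatFunc.isCoprime_num_denom r).symm.dvd_of_dvd_mul_left ?_
    exact ⟨derivative r.num, by linear_combination -heq⟩
  have hd0 : derivative r.denom = 0 := by
    by_contra hne
    exact absurd (Polynomial.degree_le_of_dvd hdvd hne)
      (not_le_of_gt (Polynomial.degree_derivative_lt r.denom_ne_zero))
  have hdc : r.denom = Polynomial.C (r.denom.coeff 0) := eq_C_of_derivative_eq_zero hd0
  have hn0 : derivative r.num = 0 := by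
    have h3 := heq
    rw [hd0, mul_zero] at h3
    exact (mul_eq_zero.mp h3).resolve_right r.denom_ne_zero
  have hnc : r.num = Polynomial.C (r.num.coeff 0) := eq_C_of_derivative_eq_zero hn0
  obtain ⟨a, ha⟩ : ∃ a, r.num = Polynomial.C a := ⟨_, hnc⟩
  obtain ⟨b, hbb⟩ : ∃ b, r.denom = Polynomial.C b := ⟨_, hdc⟩
  have hb : b ≠ 0 := fun h => r.denom_ne_zero (by rw [hbb, h, map_zero])
  refine ⟨a / b, ?_⟩
  conv_lhs => rw [← RatFunc.num_div_denom r]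
  rw [← RatFunc.algebraMap_C (a / b)]
  rw [div_eq_iff (RatFunc.algebraMap_ne_zero r.denom_ne_zero), ← map_mul]
  congr 1
  rw [ha, hbb, ← Polynomial.C_mul, div_mul_cancel₀ _ hb]

/-! ### The key residue lemma -/

lemma lemA (p q h F : ℂ[X]) (hco : IsCoprime p q) (hq : q ≠ 0) (a : ℂ)
    (hh : h.eval a ≠ 0)
    (heq : F * q ^ 2 = (X - C a) * h * (derivative p * q - p * derivative q)) :
    F.eval a = 0 := by
  by_cases hm : rootMultiplicity a q = 0
  · have hqa : q.eval a ≠ 0 := by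
      intro h0
      exact hq (rootMultiplicity_eq_zero_iff.mp hm h0)
    have h4 := congrArg (Polynomial.eval a) heq
    simp only [eval_mul, eval_pow, eval_sub, eval_X, eval_C, sub_self, zero_mul] at h4
    rcases mul_eq_zero.mp h4 with h1 | h1
    · exact h1
    · exact absurd h1 (pow_ne_zero _ hqa)
  · exfalso
    obtain ⟨k, hk⟩ : ∃ k, rootMultiplicity a q = k + 1 :=
      ⟨rootMultiplicity a q - 1, (Nat.succ_pred_eq_of_pos (Nat.pos_of_ne_zero hm)).symm⟩
    have hpa : p.eval a ≠ 0 := by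
      obtain ⟨u, v, huv⟩ := hco
      intro h0
      have h5 := congrArg (Polynomial.eval a) huv
      simp only [eval_add, eval_mul, eval_one, h0, mul_zero] at h5
      rw [(rootMultiplicity_pos hq).mp (Nat.pos_of_ne_zero hm)] at h5
      simp at h5
    obtain ⟨c, hqc, hcnd⟩ := q.exists_eq_pow_rootMultiplicity_mul_and_not_dvd hq a
    rw [hk] at hqc
    have hca : c.eval a ≠ 0 := fun h0 => hcnd (dvd_iff_isRoot.mpr h0)
    set e : ℂ[X] :=
      (X - C a) * (derivative p * c - p * derivative c) - C ((k : ℂ) + 1) * (p * c) with he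
    have hqd : derivative q = C ((k : ℂ) + 1) * (X - C a) ^ k * c
        + (X - C a) ^ (k + 1) * derivative c := by
      rw [hqc, derivative_mul, derivative_pow]
      simp only [derivative_sub, derivative_X, derivative_C, sub_zero, mul_one,
        Nat.add_sub_cancel, Nat.cast_add, Nat.cast_one]
    have hkey : derivative p * q - p * derivative q = (X - C a) ^ k * e := by
      rw [hqd, he]
      nth_rewrite 1 [hqc]
      ring
    have h2 : (X - C a) ^ (k + 1) * (F * (X - C a) ^ (k + 1) * c ^ 2)
        = (X - C a) ^ (k + 1) * (h * e) := by
      linear_combination heq + ((X - C a) * h) * hkey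
        - F * (q + (X - C a) ^ (k + 1) * c) * hqc
    have h3 : F * (X - C a) ^ (k + 1) * c ^ 2 = h * e :=
      mul_left_cancel₀ (pow_ne_zero _ (X_sub_C_ne_zero a)) h2
    have hea : e.eval a = -(((k : ℂ) + 1) * (p.eval a * c.eval a)) := by
      rw [he]
      simp
    have h4 := congrArg (Polynomial.eval a) h3
    simp only [eval_mul, eval_pow, eval_sub, eval_X, eval_C, sub_self] at h4
    rw [zero_pow (Nat.succ_ne_zero k), mul_zero, zero_mul, hea] at h4
    have hkne : ((k : ℂ) + 1) ≠ 0 := Nat.cast_add_one_ne_zero k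
    exact (mul_ne_zero hh (neg_ne_zero.mpr (mul_ne_zero hkne (mul_ne_zero hpa hca)))) h4.symm

lemma one_sub_X_ne_zero : (1 - X : ℂ[X]) ≠ 0 := by
  intro h
  have := congrArg (Polynomial.eval 0) h
  simp at this

lemma keyD (r : RatFunc ℂ) (c0 c1 : ℂ)
    (h : D r = RatFunc.C c0 * RatFunc.X⁻¹ + RatFunc.C c1 * (1 - RatFunc.X)⁻¹) :
    c0 = 0 ∧ c1 = 0 := by
  set n := r.num with hn
  set d := r.denom with hdd
  set P : ℂ[X] := derivative n * d - n * derivative d with hP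
  have hd2 : algebraMap ℂ[X] (RatFunc ℂ) d ≠ 0 := RatFunc.algebraMap_ne_zero r.denom_ne_zero
  have hX : algebraMap ℂ[X] (RatFunc ℂ) X ≠ 0 := RatFunc.algebraMap_ne_zero X_ne_zero
  have h1X : algebraMap ℂ[X] (RatFunc ℂ) (1 - X) ≠ 0 :=
    RatFunc.algebraMap_ne_zero one_sub_X_ne_zero
  rw [D, ← hn, ← hdd, ← hP, map_pow, ← RatFunc.algebraMap_C c0, ← RatFunc.algebraMap_C c1,
    ← RatFunc.algebraMap_X, ← map_one (algebraMap ℂ[X] (RatFunc ℂ)), ← map_sub] at h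
  have final : algebraMap ℂ[X] (RatFunc ℂ) (P * (X * (1 - X)))
      = algebraMap ℂ[X] (RatFunc ℂ) ((C c0 * (1 - X) + C c1 * X) * d ^ 2) := by
    rw [← div_eq_mul_inv, ← div_eq_mul_inv, div_add_div _ _ hX h1X,
      div_eq_div_iff (pow_ne_zero _ hd2) (mul_ne_zero hX h1X)] at h
    rw [map_mul, map_mul, map_mul, map_add, map_mul, map_mul, map_pow]
    linear_combination h
  have poly : P * (X * (1 - X)) = (C c0 * (1 - X) + C c1 * X) * d ^ 2 :=
    RatFunc.algebraMap_injective ℂ final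
  set F : ℂ[X] := C c0 * (1 - X) + C c1 * X with hF
  have hco := r.isCoprime_num_denom
  constructor
  · have h0 : F.eval 0 = 0 := by
      apply lemA n d (1 - X) F hco r.denom_ne_zero 0 (by simp)
      rw [map_zero, sub_zero, ← hP]
      linear_combination -poly
    rw [hF] at h0
    simpa using h0
  · have h1 : F.eval 1 = 0 := by
      apply lemA n d (-X) F hco r.denom_ne_zero 1 (by simp)
      rw [map_one, ← hP]
      linear_combination -poly
    rw [hF] at h1
    simpa using h1

/-! ### Finitely supported families and the derived family -/

/-- The family of coefficients obtained by differentiating the relation `∑ g_w L_w = 0`. -/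
def Dfam (g : List Bool →₀ RatFunc ℂ) : List Bool →₀ RatFunc ℂ :=
  Finsupp.onFinset (g.support ∪ g.support.image List.tail)
    (fun u => D (g u) + g (false :: u) * RatFunc.X⁻¹ + g (true :: u) * (1 - RatFunc.X)⁻¹)
    (fun u hu => by
      classical
      by_contra hnu
      apply hu
      have h1 : g u = 0 := by
        by_contra h
        exact hnu (Finset.mem_union_left _ (Finsupp.mem_support_iff.mpr h))
      have h2 : g (false :: u) = 0 := by
        by_contra h
        exact hnu (Finset.mem_union_right _ (Finset.mem_image.mpr
          ⟨false :: u, Finsupp.mem_support_iff.mpr h, rfl⟩))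
      have h3 : g (true :: u) = 0 := by
        by_contra h
        exact hnu (Finset.mem_union_right _ (Finset.mem_image.mpr
          ⟨true :: u, Finsupp.mem_support_iff.mpr h, rfl⟩))
      show PolylogAux.D (g u) + g (false :: u) * RatFunc.X⁻¹
        + g (true :: u) * (1 - RatFunc.X)⁻¹ = 0
      rw [h1, h2, h3, D_zero, zero_mul, zero_mul, add_zero, add_zero])

lemma Dfam_apply (g : List Bool →₀ RatFunc ℂ) (u : List Bool) :
    Dfam g u = D (g u) + g (false :: u) * RatFunc.X⁻¹
      + g (true :: u) * (1 - RatFunc.X)⁻¹ := rfl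

/-- Partition a sum over the cons-closure of the support. -/
lemma split_sum (g : List Bool →₀ RatFunc ℂ) (t : List Bool → ℂ)
    (ht : ∀ w, g w = 0 → t w = 0) (h0 : t [] = 0) :
    ∑ w ∈ (g.support ∪ g.support.image List.tail), t w
      = (∑ u ∈ (g.support ∪ g.support.image List.tail), t (false :: u))
        + ∑ u ∈ (g.support ∪ g.support.image List.tail), t (true :: u) := by
  classical
  set A := g.support ∪ g.support.image List.tail with hA
  have h1 : ∑ w ∈ A, t w = ∑ w ∈ g.support, t w := by
    refine (Finset.sum_subset Finset.subset_union_left ?_).symm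
    intro w _ hw
    exact ht w (Finsupp.notMem_support_iff.mp hw)
  set M : Finset (List Bool) := A.image (false :: ·) ∪ A.image (true :: ·) with hM
  have hnil : ([] : List Bool) ∉ M := by
    simp [hM]
  have h2 : ∑ w ∈ g.support, t w = ∑ w ∈ insert ([] : List Bool) M, t w := by
    refine Finset.sum_subset ?_ ?_
    · intro w hw
      rcases w with _ | ⟨b, u⟩
      · exact Finset.mem_insert_self _ _
      · refine Finset.mem_insert_of_mem ?_
        have hu : u ∈ A := by
          rw [hA]
          refine Finset.mem_union_right _ ?_
          exact Finset.mem_image.mpr ⟨b :: u, hw, rfl⟩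
        rcases b with _ | _
        · exact Finset.mem_union_left _ (Finset.mem_image.mpr ⟨u, hu, rfl⟩)
        · exact Finset.mem_union_right _ (Finset.mem_image.mpr ⟨u, hu, rfl⟩)
    · intro w _ hw
      exact ht w (Finsupp.notMem_support_iff.mp hw)
  have h3 : ∑ w ∈ insert ([] : List Bool) M, t w = ∑ w ∈ M, t w := by
    rw [Finset.sum_insert hnil, h0, zero_add]
  have hdisj : Disjoint (A.image (false :: ·)) (A.image (true :: ·)) := by
    rw [Finset.disjoint_left]
    rintro w hw1 hw2
    obtain ⟨u, _, rfl⟩ := Finset.mem_image.mp hw1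
    obtain ⟨v, _, hv⟩ := Finset.mem_image.mp hw2
    injection hv with hb _
    exact Bool.noConfusion hb
  have h4 : ∑ w ∈ M, t w = (∑ u ∈ A, t (false :: u)) + ∑ u ∈ A, t (true :: u) := by
    rw [hM, Finset.sum_union hdisj, Finset.sum_image (fun x _ y _ h => by injection h),
      Finset.sum_image (fun x _ y _ h => by injection h)]
  rw [h1, h2, h3, h4]

/-! ### Analytic lemmas -/

lemma U_infinite {U : Set ℂ} (hUo : IsOpen U) (hUne : U.Nonempty) : U.Infinite := by
  obtain ⟨z0, hz0⟩ := hUne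
  obtain ⟨ε, hε, hball⟩ := Metric.isOpen_iff.mp hUo z0 hz0
  have himg : (fun t : ℝ => z0 + (t : ℂ)) '' Set.Ioo 0 (ε / 2) ⊆ U := by
    rintro _ ⟨t, ht, rfl⟩
    apply hball
    rw [Metric.mem_ball, dist_eq_norm]
    have : z0 + (t : ℂ) - z0 = (t : ℂ) := by ring
    rw [this, Complex.norm_real, Real.norm_eq_abs, abs_of_pos ht.1]
    linarith [ht.2]
  refine Set.Infinite.mono himg ?_
  refine Set.Infinite.image ?_ (Set.Ioo_infinite (by linarith))
  intro a _ b _ hab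
  have : (a : ℂ) = (b : ℂ) := by
    have := add_left_cancel hab
    exact this
  exact_mod_cast this

lemma rat_zero {U : Set ℂ} (hUo : IsOpen U) (hUne : U.Nonempty)
    (r : RatFunc ℂ) (S : Set ℂ) (hS : S.Finite) (h : ∀ z ∈ U \ S, ev r z = 0) : r = 0 := by
  have hbad : {z : ℂ | r.denom.eval z = 0}.Finite := finite_setOf_isRoot r.denom_ne_zero
  have hsub : U \ (S ∪ {z : ℂ | r.denom.eval z = 0}) ⊆ {x | r.num.IsRoot x} := by
    intro z hz
    have h1 := h z ⟨hz.1, fun c => hz.2 (Or.inl c)⟩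
    have h2 : r.denom.eval z ≠ 0 := fun c => hz.2 (Or.inr c)
    rw [ev] at h1
    exact (div_eq_zero_iff.mp h1).resolve_right h2
  have hinf : (U \ (S ∪ {z : ℂ | r.denom.eval z = 0})).Infinite :=
    (U_infinite hUo hUne).diff (hS.union hbad)
  rw [← RatFunc.num_eq_zero_iff]
  exact r.num.eq_zero_of_infinite_isRoot (hinf.mono hsub)

/-- Bad set of a family. -/
def BS (g : List Bool →₀ RatFunc ℂ) : Set ℂ :=
  ⋃ w ∈ (g.support : Set (List Bool)),
    ({z | (g w).denom.eval z = 0} ∪ {z | (D (g w)).denom.eval z = 0})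

lemma BS_finite (g : List Bool →₀ RatFunc ℂ) : (BS g).Finite :=
  Set.Finite.biUnion g.support.finite_toSet (fun w _ =>
    (finite_setOf_isRoot (g w).denom_ne_zero).union
      (finite_setOf_isRoot (D (g w)).denom_ne_zero))

lemma good_of_not_BS {g : List Bool →₀ RatFunc ℂ} {z : ℂ} (hz : z ∉ BS g) (w : List Bool) :
    Good z (g w) ∧ Good z (D (g w)) := by
  classical
  by_cases hw : w ∈ g.support
  · constructor
    · intro h0
      exact hz (Set.mem_biUnion hw (Or.inl h0))
    · intro h0
      exact hz (Set.mem_biUnion hw (Or.inr h0))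
  · have h1 : g w = 0 := Finsupp.notMem_support_iff.mp hw
    rw [h1, D_zero]
    constructor <;> · rw [Good, RatFunc.denom_zero]; simp

/-- The relation predicate. -/
def Rel (L : List Bool → ℂ → ℂ) (U : Set ℂ) (g : List Bool →₀ RatFunc ℂ) : Prop :=
  ∃ S : Set ℂ, S.Finite ∧ ∀ z ∈ U \ S, ∑ w ∈ g.support, ev (g w) z * L w z = 0

lemma ScaleRel (L : List Bool → ℂ → ℂ) (U : Set ℂ) (c : RatFunc ℂ)
    (g : List Bool →₀ RatFunc ℂ) (h : Rel L U g) : Rel L U (c • g) := by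
  classical
  obtain ⟨S, hSf, hS⟩ := h
  refine ⟨S ∪ ({z | c.denom.eval z = 0} ∪ BS g),
    hSf.union ((finite_setOf_isRoot c.denom_ne_zero).union (BS_finite g)), ?_⟩
  intro z hz
  have hc : Good z c := fun h0 => hz.2 (Or.inr (Or.inl h0))
  have hgood : ∀ w, Good z (g w) := fun w =>
    (good_of_not_BS (fun h0 => hz.2 (Or.inr (Or.inr h0))) w).1
  calc ∑ w ∈ (c • g).support, ev ((c • g) w) z * L w z
      = ∑ w ∈ g.support, ev ((c • g) w) z * L w z :=
        Finset.sum_subset Finsupp.support_smul (fun w _ hw => by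
          rw [Finsupp.notMem_support_iff.mp hw, ev_zero, zero_mul])
    _ = ∑ w ∈ g.support, ev c z * (ev (g w) z * L w z) := by
        refine Finset.sum_congr rfl fun w _ => ?_
        rw [Finsupp.smul_apply, smul_eq_mul, ev_mul hc (hgood w), mul_assoc]
    _ = ev c z * ∑ w ∈ g.support, ev (g w) z * L w z := (Finset.mul_sum _ _ _).symm
    _ = 0 := by rw [hS z ⟨hz.1, fun cc => hz.2 (Or.inl cc)⟩, mul_zero]

/-- Derivative values of the `L` family. -/
def dval (L : List Bool → ℂ → ℂ) (z : ℂ) : List Bool → ℂ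
  | [] => 0
  | (false :: u) => L u z / z
  | (true :: u) => L u z / (1 - z)

@[simp] lemma dval_nil (L : List Bool → ℂ → ℂ) (z : ℂ) : dval L z [] = 0 := rfl
@[simp] lemma dval_false (L : List Bool → ℂ → ℂ) (z : ℂ) (u : List Bool) :
    dval L z (false :: u) = L u z / z := rfl
@[simp] lemma dval_true (L : List Bool → ℂ → ℂ) (z : ℂ) (u : List Bool) :
    dval L z (true :: u) = L u z / (1 - z) := rfl

lemma DRel (V : Set ℂ) (hVo : IsOpen V) (hV0 : (0 : ℂ) ∉ V) (hV1 : (1 : ℂ) ∉ V)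
    (L : List Bool → ℂ → ℂ)
    (hL1 : ∀ z ∈ V, L [] z = 1)
    (hLd0 : ∀ (u : List Bool), ∀ z ∈ V, HasDerivAt (L (false :: u)) (L u z / z) z)
    (hLd1 : ∀ (u : List Bool), ∀ z ∈ V, HasDerivAt (L (true :: u)) (L u z / (1 - z)) z)
    (U : Set ℂ) (hUo : IsOpen U) (hUV : U ⊆ V)
    (g : List Bool →₀ RatFunc ℂ) (h : Rel L U g) : Rel L U (Dfam g) := by
  classical
  obtain ⟨S, hSf, hS⟩ := h
  set A := g.support ∪ g.support.image List.tail with hA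
  have hSfin : (S ∪ BS g).Finite := hSf.union (BS_finite g)
  refine ⟨S ∪ BS g, hSfin, ?_⟩
  intro z hz
  have hzU : z ∈ U := hz.1
  have hzV : z ∈ V := hUV hzU
  have hz0 : z ≠ 0 := fun h0 => hV0 (h0 ▸ hzV)
  have hz1 : (1 : ℂ) - z ≠ 0 := by
    intro h0
    exact hV1 ((sub_eq_zero.mp h0) ▸ hzV)
  have hznB : z ∉ BS g := fun h0 => hz.2 (Or.inr h0)
  have hgood : ∀ w, Good z (g w) := fun w => (good_of_not_BS hznB w).1
  have hgoodD : ∀ w, Good z (D (g w)) := fun w => (good_of_not_BS hznB w).2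
  have hXinv : (RatFunc.X : RatFunc ℂ)⁻¹
      = algebraMap ℂ[X] (RatFunc ℂ) 1 / algebraMap ℂ[X] (RatFunc ℂ) X := by
    rw [map_one, one_div, RatFunc.algebraMap_X]
  have h1Xinv : ((1 : RatFunc ℂ) - RatFunc.X)⁻¹
      = algebraMap ℂ[X] (RatFunc ℂ) 1 / algebraMap ℂ[X] (RatFunc ℂ) (1 - X) := by
    rw [map_one, one_div, map_sub, map_one, RatFunc.algebraMap_X]
  have hXz : (X : ℂ[X]).eval z ≠ 0 := by simpa using hz0
  have h1Xz : ((1 : ℂ[X]) - X).eval z ≠ 0 := by simpa using hz1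
  have hgX : Good z (RatFunc.X⁻¹ : RatFunc ℂ) :=
    good_of_dvd ((RatFunc.denom_dvd X_ne_zero).mpr ⟨1, hXinv⟩) hXz
  have hg1X : Good z ((1 - RatFunc.X : RatFunc ℂ))⁻¹ :=
    good_of_dvd ((RatFunc.denom_dvd one_sub_X_ne_zero).mpr ⟨1, h1Xinv⟩) h1Xz
  have hevX : ev (RatFunc.X⁻¹ : RatFunc ℂ) z = 1 / z := by
    rw [hXinv, ev_div _ _ hXz]
    simp
  have hev1X : ev ((1 - RatFunc.X : RatFunc ℂ))⁻¹ z = 1 / (1 - z) := by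
    rw [h1Xinv, ev_div _ _ h1Xz]
    simp
  have hder : ∀ w : List Bool, HasDerivAt (L w) (dval L z w) z := by
    intro w
    rcases w with _ | ⟨b, u⟩
    · refine (hasDerivAt_const z (1 : ℂ)).congr_of_eventuallyEq ?_
      filter_upwards [hVo.mem_nhds hzV] with y hy
      exact hL1 y hy
    · cases b
      · exact hLd0 u z hzV
      · exact hLd1 u z hzV
  have hF0 : ∀ y ∈ U \ (S ∪ BS g), ∑ w ∈ A, ev (g w) y * L w y = 0 := by
    intro y hy
    have he : ∑ w ∈ A, ev (g w) y * L w y = ∑ w ∈ g.support, ev (g w) y * L w y :=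
      (Finset.sum_subset Finset.subset_union_left (fun w _ hw => by
        rw [Finsupp.notMem_support_iff.mp hw, ev_zero, zero_mul])).symm
    rw [he]
    exact hS y ⟨hy.1, fun c => hy.2 (Or.inl c)⟩
  have hopen : IsOpen (U \ (S ∪ BS g)) := hUo.sdiff hSfin.isClosed
  have hDF0 : HasDerivAt (fun y => ∑ w ∈ A, ev (g w) y * L w y) 0 z := by
    refine (hasDerivAt_const z (0 : ℂ)).congr_of_eventuallyEq ?_
    filter_upwards [hopen.mem_nhds hz] with y hy
    exact hF0 y hy
  have hDFE : HasDerivAt (fun y => ∑ w ∈ A, ev (g w) y * L w y)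
      (∑ w ∈ A, (ev (D (g w)) z * L w z + ev (g w) z * dval L z w)) z :=
    HasDerivAt.fun_sum fun w _ => (hasDerivAt_ev (g w) (hgood w)).mul (hder w)
  have hE0 : ∑ w ∈ A, (ev (D (g w)) z * L w z + ev (g w) z * dval L z w) = 0 :=
    hDFE.unique hDF0
  have hterm : ∀ u : List Bool, ev (Dfam g u) z
      = ev (D (g u)) z + ev (g (false :: u)) z * (1 / z)
        + ev (g (true :: u)) z * (1 / (1 - z)) := by
    intro u
    rw [Dfam_apply,
      ev_add ((hgoodD u).add ((hgood _).mul hgX)) ((hgood _).mul hg1X),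
      ev_add (hgoodD u) ((hgood _).mul hgX), ev_mul (hgood _) hgX,
      ev_mul (hgood _) hg1X, hevX, hev1X]
  have hsplit : ∑ w ∈ A, ev (g w) z * dval L z w
      = (∑ u ∈ A, ev (g (false :: u)) z * dval L z (false :: u))
        + ∑ u ∈ A, ev (g (true :: u)) z * dval L z (true :: u) :=
    split_sum g (fun w => ev (g w) z * dval L z w)
      (fun w hw => by
        show ev (g w) z * dval L z w = 0
        rw [hw, ev_zero, zero_mul])
      (by
        show ev (g []) z * dval L z [] = 0
        rw [dval_nil, mul_zero])
  have goal' : ∑ w ∈ A, ev (Dfam g w) z * L w z = 0 := by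
    calc ∑ w ∈ A, ev (Dfam g w) z * L w z
        = ∑ w ∈ A, (ev (D (g w)) z * L w z
            + (ev (g (false :: w)) z * dval L z (false :: w)
              + ev (g (true :: w)) z * dval L z (true :: w))) := by
          refine Finset.sum_congr rfl fun w _ => ?_
          rw [hterm w, dval_false, dval_true]
          ring
      _ = (∑ w ∈ A, ev (D (g w)) z * L w z)
            + ((∑ w ∈ A, ev (g (false :: w)) z * dval L z (false :: w))
              + ∑ w ∈ A, ev (g (true :: w)) z * dval L z (true :: w)) := by
          rw [Finset.sum_add_distrib, Finset.sum_add_distrib]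
      _ = (∑ w ∈ A, ev (D (g w)) z * L w z) + ∑ w ∈ A, ev (g w) z * dval L z w := by
          rw [← hsplit]
      _ = ∑ w ∈ A, (ev (D (g w)) z * L w z + ev (g w) z * dval L z w) :=
          Finset.sum_add_distrib.symm
      _ = 0 := hE0
  have hfinal : ∑ w ∈ (Dfam g).support, ev (Dfam g w) z * L w z
      = ∑ w ∈ A, ev (Dfam g w) z * L w z :=
    Finset.sum_subset (by rw [hA]; exact Finsupp.support_onFinset_subset) (fun w _ hw => by
      rw [Finsupp.notMem_support_iff.mp hw, ev_zero, zero_mul])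
  rw [hfinal]
  exact goal'

/-! ### The main induction -/

lemma main_ind (V : Set ℂ) (hVo : IsOpen V) (hV0 : (0 : ℂ) ∉ V) (hV1 : (1 : ℂ) ∉ V)
    (L : List Bool → ℂ → ℂ)
    (hL1 : ∀ z ∈ V, L [] z = 1)
    (hLd0 : ∀ (u : List Bool), ∀ z ∈ V, HasDerivAt (L (false :: u)) (L u z / z) z)
    (hLd1 : ∀ (u : List Bool), ∀ z ∈ V, HasDerivAt (L (true :: u)) (L u z / (1 - z)) z)
    (U : Set ℂ) (hUo : IsOpen U) (hUne : U.Nonempty) (hUV : U ⊆ V) :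
    ∀ N (g : List Bool →₀ RatFunc ℂ), (∀ w ∈ g.support, w.length ≤ N) →
      Rel L U g → g = 0 := by
  classical
  intro N
  induction N with
  | zero =>
    intro g hlen hrel
    obtain ⟨S, hSf, hrel⟩ := hrel
    have hnil : g [] = 0 := by
      apply rat_zero hUo hUne _ S hSf
      intro z hz
      have h1 := hrel z hz
      have hsub : g.support ⊆ {[]} := by
        intro w hw
        rw [Finset.mem_singleton]
        exact List.length_eq_zero_iff.mp (Nat.le_zero.mp (hlen w hw))
      have h2 : ∑ w ∈ ({[]} : Finset (List Bool)), ev (g w) z * L w z = 0 := by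
        rw [← Finset.sum_subset hsub (fun w _ hw => by
          rw [Finsupp.notMem_support_iff.mp hw, ev_zero, zero_mul])]
        exact h1
      rw [Finset.sum_singleton, hL1 z (hUV hz.1), mul_one] at h2
      exact h2
    ext w
    rcases w with _ | ⟨b, u⟩
    · simpa using hnil
    · by_cases hw : (b :: u) ∈ g.support
      · exact absurd (Nat.le_zero.mp (hlen _ hw)) (by simp)
      · simpa using Finsupp.notMem_support_iff.mp hw
  | succ N ih =>
    intro g hlen hrel
    suffices h : ∀ k (g' : List Bool →₀ RatFunc ℂ),
        (∀ w ∈ g'.support, w.length ≤ N + 1) →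
        (g'.support.filter (fun w => w.length = N + 1)).card ≤ k →
        Rel L U g' → g' = 0 by
      exact h _ g hlen le_rfl hrel
    intro k
    induction k with
    | zero =>
      intro g' hlen' hcard hrel'
      apply ih g' _ hrel'
      intro w hw
      have h1 := hlen' w hw
      have h2 : ¬w.length = N + 1 := by
        intro hcontra
        have hmem : w ∈ g'.support.filter (fun w => w.length = N + 1) :=
          Finset.mem_filter.mpr ⟨hw, hcontra⟩
        have := Finset.card_pos.mpr ⟨w, hmem⟩
        omega
      omega
    | succ k ihk =>
      intro g' hlen' hcard hrel'
      by_cases hne : (g'.support.filter (fun w => w.length = N + 1)).Nonempty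
      swap
      · exact ihk g' hlen'
          (by rw [Finset.not_nonempty_iff_eq_empty.mp hne]; simp) hrel'
      obtain ⟨w0, hw0⟩ := hne
      obtain ⟨hw0s, hw0l⟩ := Finset.mem_filter.mp hw0
      have hcne : g' w0 ≠ 0 := Finsupp.mem_support_iff.mp hw0s
      set g1 := (g' w0)⁻¹ • g' with hg1def
      have hg1 : ∀ w, g1 w = (g' w0)⁻¹ * g' w := fun w => by
        rw [hg1def, Finsupp.smul_apply, smul_eq_mul]
      have hg1rel : Rel L U g1 := ScaleRel L U _ g' hrel'
      have hg1w0 : g1 w0 = 1 := by rw [hg1, inv_mul_cancel₀ hcne]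
      have hg1zero : ∀ w : List Bool, N + 1 < w.length → g1 w = 0 := by
        intro w hw
        rw [hg1]
        by_cases hgw : g' w = 0
        · rw [hgw, mul_zero]
        · exact absurd (hlen' w (Finsupp.mem_support_iff.mpr hgw)) (by omega)
      have hg2rel : Rel L U (Dfam g1) :=
        DRel V hVo hV0 hV1 L hL1 hLd0 hLd1 U hUo hUV g1 hg1rel
      have hg2top : ∀ w : List Bool, w.length = N + 1 → Dfam g1 w = D (g1 w) := by
        intro w hwl
        rw [Dfam_apply, hg1zero (false :: w) (by simp [hwl]),
          hg1zero (true :: w) (by simp [hwl]), zero_mul, zero_mul, add_zero, add_zero]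
      have hg1supp : g1.support ⊆ g'.support := Finsupp.support_smul
      have hg2len : ∀ w ∈ (Dfam g1).support, w.length ≤ N + 1 := by
        intro w hw
        rcases Finset.mem_union.mp (Finsupp.support_onFinset_subset hw) with h | h
        · exact hlen' w (hg1supp h)
        · obtain ⟨v, hv, rfl⟩ := Finset.mem_image.mp h
          have hvl := hlen' v (hg1supp hv)
          have := List.length_tail (l := v)
          omega
      have hg2card : ((Dfam g1).support.filter (fun w => w.length = N + 1)).card ≤ k := by
        have hsub : (Dfam g1).support.filter (fun w => w.length = N + 1)
            ⊆ (g'.support.filter (fun w => w.length = N + 1)).erase w0 := by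
          intro w hw
          obtain ⟨hw1, hw2⟩ := Finset.mem_filter.mp hw
          have hD : D (g1 w) ≠ 0 := by
            rw [← hg2top w hw2]
            exact Finsupp.mem_support_iff.mp hw1
          have hne0 : g1 w ≠ 0 := by
            intro h0
            rw [h0, D_zero] at hD
            exact hD rfl
          have hwne : w ≠ w0 := by
            intro h0
            rw [h0, hg1w0, D_one] at hD
            exact hD rfl
          have hsup : w ∈ g'.support := by
            refine Finsupp.mem_support_iff.mpr ?_
            intro h0
            apply hne0
            rw [hg1, h0, mul_zero]
          exact Finset.mem_erase.mpr ⟨hwne, Finset.mem_filter.mpr ⟨hsup, hw2⟩⟩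
        have h1 := Finset.card_le_card hsub
        rw [Finset.card_erase_of_mem hw0] at h1
        have h2 := Finset.card_pos.mpr ⟨w0, hw0⟩
        omega
      have hg2z : Dfam g1 = 0 := ihk (Dfam g1) hg2len hg2card hg2rel
      have hconst : ∀ w : List Bool, w.length = N + 1 → ∃ a, g1 w = RatFunc.C a := by
        intro w hwl
        apply D_eq_zero
        rw [← hg2top w hwl, hg2z]
        simp
      rcases w0 with _ | ⟨b, u0⟩
      · simp at hw0l
      have hu0 : u0.length = N := by simpa using hw0l
      obtain ⟨a0, ha0⟩ := hconst (false :: u0) (by simpa using hu0)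
      obtain ⟨a1, ha1⟩ := hconst (true :: u0) (by simpa using hu0)
      have hgu : Dfam g1 u0 = 0 := by rw [hg2z]; simp
      rw [Dfam_apply, ha0, ha1] at hgu
      have hDq : D (g1 u0) = RatFunc.C (-a0) * RatFunc.X⁻¹
          + RatFunc.C (-a1) * (1 - RatFunc.X)⁻¹ := by
        rw [map_neg, map_neg]
        linear_combination hgu
      obtain ⟨h0, h1⟩ := keyD _ _ _ hDq
      exfalso
      cases b
      · rw [ha0, show a0 = 0 from neg_eq_zero.mp h0, map_zero] at hg1w0
        exact zero_ne_one hg1w0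
      · rw [ha1, show a1 = 0 from neg_eq_zero.mp h1, map_zero] at hg1w0
        exact zero_ne_one hg1w0

end
end PolylogAux

/-- **Linear independence of polylogarithms over `ℂ(z)`.**  Let
`V = ℂ ∖ ((−∞,0] ∪ [1,+∞))` be the doubly cut plane and `X = {x_0,x_1}`
(encoded as `Bool`, `false = x_0`, `true = x_1`).  Let `(L_w)_{w∈X*}` be the
polylogarithmic family: analytic functions on `V` with `L_1 ≡ 1`,
`L_{x_0 u}'(z) = L_u(z)/z` and `L_{x_1 u}'(z) = L_u(z)/(1−z)` on `V`
(the solution of `dS/dz = (x_0/z + x_1/(1−z))S`).  If `(f_w)` is a finitely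
supported family of rational functions with `Σ_w f_w(z)·L_w(z) = 0` on a
nonempty open subset of `V` avoiding the poles of all the `f_w`, then every
`f_w = 0`. -/
theorem polylog_linear_independence_over_ratfunc
    (V : Set ℂ)
    (hVdef : V = {z : ℂ | ¬(z.im = 0 ∧ z.re ≤ 0) ∧ ¬(z.im = 0 ∧ 1 ≤ z.re)})
    (L : List Bool → ℂ → ℂ)
    (hLa : ∀ w, AnalyticOnNhd ℂ (L w) V)
    (hL1 : ∀ z ∈ V, L [] z = 1)
    (hLd0 : ∀ (u : List Bool), ∀ z ∈ V,
      HasDerivAt (L (false :: u)) (L u z / z) z)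
    (hLd1 : ∀ (u : List Bool), ∀ z ∈ V,
      HasDerivAt (L (true :: u)) (L u z / (1 - z)) z)
    (f : List Bool →₀ RatFunc ℂ)
    (U : Set ℂ) (hUo : IsOpen U) (hUne : U.Nonempty) (hUV : U ⊆ V)
    (hpoles : ∀ w, ∀ z ∈ U, Polynomial.eval z (f w).denom ≠ 0)
    (hrel : ∀ z ∈ U,
      (f.sum fun w r => RatFunc.eval (RingHom.id ℂ) z r * L w z) = 0) :
    f = 0 := by
  have hVo : IsOpen V := by
    rw [hVdef]
    have h1 : IsOpen {z : ℂ | ¬(z.im = 0 ∧ z.re ≤ 0)} := by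
      have : IsClosed {z : ℂ | z.im = 0 ∧ z.re ≤ 0} :=
        (isClosed_eq Complex.continuous_im continuous_const).inter
          (isClosed_le Complex.continuous_re continuous_const)
      exact this.isOpen_compl
    have h2 : IsOpen {z : ℂ | ¬(z.im = 0 ∧ 1 ≤ z.re)} := by
      have : IsClosed {z : ℂ | z.im = 0 ∧ 1 ≤ z.re} :=
        (isClosed_eq Complex.continuous_im continuous_const).inter
          (isClosed_le continuous_const Complex.continuous_re)
      exact this.isOpen_compl
    exact h1.inter h2
  have hV0 : (0 : ℂ) ∉ V := by
    rw [hVdef]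
    intro h
    exact h.1 ⟨Complex.zero_im, le_of_eq Complex.zero_re⟩
  have hV1 : (1 : ℂ) ∉ V := by
    rw [hVdef]
    intro h
    exact h.2 ⟨Complex.one_im, le_of_eq Complex.one_re.symm⟩
  have hRel : PolylogAux.Rel L U f := by
    refine ⟨∅, Set.finite_empty, fun z hz => ?_⟩
    have h1 := hrel z hz.1
    rw [Finsupp.sum] at h1
    rw [← h1]
    exact Finset.sum_congr rfl fun w _ => by rw [PolylogAux.ev_eq_eval]
  exact PolylogAux.main_ind V hVo hV0 hV1 L hL1 hLd0 hLd1 U hUo hUne hUV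
    (f.support.sup List.length) f (fun w hw => Finset.le_sup hw) hRel
end

section
/- Let S : X* → A be a noncommutative series satisfying d⟨S,1⟩ = 0 and d⟨S,xu⟩ = u_x·⟨S,u⟩ for every letter x ∈ X and word u ∈ X*, where (u_x)_{x∈X} is a family of elements of A. Let T : X* → k be any scalar series and define the product series ST by ⟨ST,w⟩ := Σ_{uv=w} ⟨S,u⟩·T(v) (sum over all factorizations of the word w). Then ST satisfies the same differential equation: d⟨ST,1⟩ = 0 and d⟨ST,xu⟩ = u_x·⟨ST,u⟩ for every letter x ∈ X and word u ∈ X*. In other words, the solution set of dS = MS is stable under right multiplication by constant series. -/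
/-- **Stability of solutions under right multiplication by constant series.**
Let `(A,d)` be a commutative differential `k`-algebra with constants `k·1`,
and `S : X* → A` a series satisfying `d⟨S,1⟩ = 0` and `d⟨S,xu⟩ = u_x·⟨S,u⟩`
for all letters `x` and words `u` (the equation `dS = MS` with
`M = Σ_x u_x x`).  For any scalar series `T : X* → k`, the Cauchy product
`⟨ST,w⟩ = Σ_{uv=w} ⟨S,u⟩·T(v)` satisfies the same differential equation:
`d⟨ST,1⟩ = 0` and `d⟨ST,xu⟩ = u_x·⟨ST,u⟩`. -/
theorem solution_set_stable_under_constant_series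
    {k : Type*} [Field k] [CharZero k]
    {A : Type*} [CommRing A] [Algebra k A]
    (d : Derivation k A A)
    (hconst : ∀ a : A, d a = 0 ↔ ∃ c : k, a = algebraMap k A c)
    {X : Type*} (u : X → A)
    (S : List X → A)
    (hS1 : d (S []) = 0)
    (hSdiff : ∀ (x : X) (w : List X), d (S (x :: w)) = u x * S w)
    (T : List X → k)
    (ST : List X → A)
    (hST : ∀ w : List X, ST w =
      ∑ i ∈ Finset.range (w.length + 1),
        S (w.take i) * algebraMap k A (T (w.drop i))) :
    d (ST []) = 0 ∧ ∀ (x : X) (w : List X), d (ST (x :: w)) = u x * ST w := by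
  have hd : ∀ (a : A) (c : k), d (a * algebraMap k A c) = d a * algebraMap k A c := by
    intro a c
    rw [d.leibniz, Derivation.map_algebraMap]
    simp [smul_eq_mul, mul_comm]
  constructor
  · rw [hST]
    simp [hd, hS1]
  · intro x w
    rw [hST (x :: w), hST w, map_sum]
    rw [Finset.sum_range_succ']
    simp only [List.take_succ_cons, List.drop_succ_cons, List.length_cons, List.take_zero,
      List.drop_zero, hd, hS1, hSdiff, zero_mul, add_zero, Finset.mul_sum, mul_assoc]
end

section
/- Failure of independence for a non-Fuchsian multiplier: let V be a connected open subset of ℂ ∖ {0,1}, let g_0(z) = −1/z and g_1(z) = 1/(1−z) (so g_0'(z) = 1/z² and g_1'(z) = 1/(1−z)²), and let g_{10}, g_{01} : V → ℂ be differentiable functions with g_{10}'(z) = g_0(z)/(1−z)² and g_{01}'(z) = g_1(z)/z² for all z ∈ V. Then the function g_{10} + g_{01} + g_1 − g_0 has derivative identically zero on V, hence is constant on V; in particular the coefficients ⟨S,x_1x_0⟩, ⟨S,x_0x_1⟩, ⟨S,x_1⟩, ⟨S,x_0⟩, ⟨S,1⟩ of any such solution S of dS = (x_0/z² + x_1/(1−z)²)S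 satisfy a nontrivial ℂ-linear relation. -/
/-- A function with zero derivative on an open preconnected set is constant there. -/
lemma const_of_deriv_zero_on {f : ℂ → ℂ} {V : Set ℂ} (hVo : IsOpen V)
    (hVp : IsPreconnected V) (hf : ∀ z ∈ V, HasDerivAt f 0 z)
    {x y : ℂ} (hx : x ∈ V) (hy : y ∈ V) : f x = f y := by
  -- locally constant: on any ball inside V, f is constant
  have hball : ∀ z ∈ V, ∃ r > 0, Metric.ball z r ⊆ V ∧
      ∀ w ∈ Metric.ball z r, f w = f z := by
    intro z hz
    obtain ⟨r, hr, hrV⟩ := Metric.isOpen_iff.1 hVo z hz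
    refine ⟨r, hr, hrV, fun w hw => ?_⟩
    have hconv : Convex ℝ (Metric.ball z r) := convex_ball z r
    have hdiff : DifferentiableOn ℂ f (Metric.ball z r) := fun u hu =>
      ((hf u (hrV hu)).differentiableAt).differentiableWithinAt
    refine hconv.is_const_of_fderivWithin_eq_zero hdiff (fun u hu => ?_) hw
      (Metric.mem_ball_self hr)
    have h1 : HasFDerivAt f (0 : ℂ →L[ℂ] ℂ) u := by
      have h := (hf u (hrV hu)).hasFDerivAt
      have hz : (ContinuousLinearMap.toSpanSingleton ℂ (0 : ℂ)) = 0 := by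
        ext; simp
      rwa [hz] at h
    rw [fderivWithin_eq_fderiv (Metric.isOpen_ball.uniqueDiffWithinAt hu)
      h1.differentiableAt, h1.fderiv]
  -- clopen argument
  set u : Set ℂ := {z ∈ V | f z = f x} with hu
  set v : Set ℂ := {z ∈ V | f z ≠ f x} with hv
  have hou : IsOpen u := by
    rw [Metric.isOpen_iff]
    intro z hz
    obtain ⟨r, hr, hrV, hconst⟩ := hball z hz.1
    exact ⟨r, hr, fun w hw => ⟨hrV hw, (hconst w hw).trans hz.2⟩⟩
  have hov : IsOpen v := by
    rw [Metric.isOpen_iff]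
    intro z hz
    obtain ⟨r, hr, hrV, hconst⟩ := hball z hz.1
    exact ⟨r, hr, fun w hw => ⟨hrV hw, (hconst w hw) ▸ hz.2⟩⟩
  have hsub : V ⊆ u := by
    apply hVp.subset_left_of_subset_union hou hov
    · exact Set.disjoint_left.2 fun z hz hz' => hz'.2 hz.2
    · intro z hz
      by_cases h : f z = f x
      · exact Or.inl ⟨hz, h⟩
      · exact Or.inr ⟨hz, h⟩
    · exact ⟨x, hx, hx, rfl⟩
  exact ((hsub hy).2).symm ▸ rfl

/-- **Failure of independence for a non-Fuchsian multiplier.**  Let `V` be a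
connected open subset of `ℂ ∖ {0,1}` and consider the solution `S` of
`dS/dz = (x_0/z² + x_1/(1−z)²)S`, `⟨S,1⟩ = 1`, whose first coefficients are
`g_0 = ⟨S,x_0⟩ = −1/z`, `g_1 = ⟨S,x_1⟩ = 1/(1−z)` (so `g_0' = 1/z²`,
`g_1' = 1/(1−z)²`), and `g_{10} = ⟨S,x_1x_0⟩`, `g_{01} = ⟨S,x_0x_1⟩`
differentiable on `V` with `g_{10}' = g_0/(1−z)²` and `g_{01}' = g_1/z²`.
Then `g_{10} + g_{01} + g_1 − g_0` has derivative identically zero on `V`,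
hence is constant there: the coefficients `⟨S,x_1x_0⟩, ⟨S,x_0x_1⟩, ⟨S,x_1⟩,
⟨S,x_0⟩, ⟨S,1⟩` satisfy a nontrivial `ℂ`-linear relation. -/
theorem nonfuchsian_dependence
    (V : Set ℂ) (hVo : IsOpen V) (hVc : IsConnected V)
    (hV0 : ∀ z ∈ V, z ≠ 0) (hV1 : ∀ z ∈ V, z ≠ 1)
    (g10 g01 : ℂ → ℂ)
    (hg10 : ∀ z ∈ V, HasDerivAt g10 ((-1 / z) / (1 - z) ^ 2) z)
    (hg01 : ∀ z ∈ V, HasDerivAt g01 ((1 / (1 - z)) / z ^ 2) z) :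
    (∀ z ∈ V,
      HasDerivAt (fun z => g10 z + g01 z + 1 / (1 - z) - (-1 / z)) 0 z) ∧
    ∃ c : ℂ, ∀ z ∈ V, g10 z + g01 z + 1 / (1 - z) - (-1 / z) = c := by
  have key : ∀ z ∈ V,
      HasDerivAt (fun z => g10 z + g01 z + 1 / (1 - z) - (-1 / z)) 0 z := by
    intro z hz
    have hz0 : z ≠ 0 := hV0 z hz
    have hz1 : (1 : ℂ) - z ≠ 0 := sub_ne_zero.2 (Ne.symm (hV1 z hz))
    -- derivative of 1/(1-z)
    have h1 : HasDerivAt (fun z : ℂ => 1 / (1 - z)) (1 / (1 - z) ^ 2) z := by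
      have hs : HasDerivAt (fun z : ℂ => 1 - z) (-1) z := by
        simpa using (hasDerivAt_id z).const_sub 1
      have := hs.inv hz1
      simpa [one_div, neg_div, Pi.inv_def] using this
    -- derivative of -1/z
    have h0 : HasDerivAt (fun z : ℂ => -1 / z) (1 / z ^ 2) z := by
      have := (hasDerivAt_id z).inv hz0
      have h := this.neg
      simpa [one_div, neg_div, neg_neg, Pi.inv_def, Pi.neg_def, id] using h
    have hsum := (((hg10 z hz).add (hg01 z hz)).add h1).sub h0
    have heq : (-1 / z) / (1 - z) ^ 2 + (1 / (1 - z)) / z ^ 2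
        + 1 / (1 - z) ^ 2 - 1 / z ^ 2 = 0 := by
      field_simp [hz0, hz1]
      ring
    exact heq ▸ hsum
  refine ⟨key, ?_⟩
  obtain ⟨x, hx⟩ := hVc.nonempty
  exact ⟨g10 x + g01 x + 1 / (1 - x) - (-1 / x), fun z hz =>
    const_of_deriv_zero_on hVo hVc.isPreconnected key hz hx⟩
end

section
/- Let A be a commutative ℂ-algebra with unit and S : X* → A a series with ⟨S,1⟩ = 1. For a letter x ∈ X let Sx denote the series with ⟨Sx, ux⟩ = ⟨S,u⟩ for every word u and ⟨Sx,w⟩ = 0 for every word w not ending in x. Let ker_ℂ(S) := {P : X* → ℂ finitely supported : Σ_w P(w)·⟨S,w⟩ = 0}. Then the following are equivalent: (i) for every x ∈ X, ker_ℂ(S) ⊆ ker_ℂ(Sx); (vi) ker_ℂ(S) = {0}, i.e. the family (⟨S,w⟩)_{w∈X*} is linearly independent over ℂ. -/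
/-- **Proposition 4, (i) ⟺ (vi).**  Let `A` be a (nontrivial) commutative
unital `ℂ`-algebra and `S : X* → A` a series with `⟨S,1⟩ = 1`.  For a letter
`x`, let `Sx` be the right-shifted series with `⟨Sx, ux⟩ = ⟨S,u⟩` and
`⟨Sx,w⟩ = 0` for `w` not ending in `x`, and let
`ker_ℂ(S) = {P : X* → ℂ finitely supported | Σ_w P(w)·⟨S,w⟩ = 0}`.
Then `ker_ℂ(S) ⊆ ker_ℂ(Sx)` holds for every `x ∈ X` if and only if
`ker_ℂ(S) = {0}`, i.e. the family `(⟨S,w⟩)_{w∈X*}` is linearly independent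
over `ℂ`. -/
theorem kernel_stability_iff_linear_independence
    {A : Type*} [CommRing A] [Algebra ℂ A] [Nontrivial A]
    {X : Type*} [DecidableEq X]
    (S : List X → A) (hS1 : S [] = 1)
    (Sx : X → List X → A)
    (hSx : ∀ (x : X) (w : List X),
      Sx x w = if w.getLast? = some x then S w.dropLast else 0) :
    (∀ x : X, ∀ P : List X →₀ ℂ,
        (P.sum fun w c => c • S w) = 0 → (P.sum fun w c => c • Sx x w) = 0) ↔
    (∀ P : List X →₀ ℂ, (P.sum fun w c => c • S w) = 0 → P = 0) := by
  classical
  set Q : List X → (List X →₀ ℂ) → (List X →₀ ℂ) :=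
    fun w P => Finsupp.comapDomain (fun u => u ++ w) P
      ((List.append_left_injective w).injOn) with hQ
  have hQapp : ∀ w P u, Q w P u = P (u ++ w) := by
    intro w P u; simp [hQ, Finsupp.comapDomain_apply]
  constructor
  · intro hi P₀ hP₀
    have key : ∀ (x : X) (P : List X →₀ ℂ),
        ((Q [x] P).sum fun u c => c • S u) = P.sum fun w c => c • Sx x w := by
      intro x P
      rw [Finsupp.sum, Finsupp.sum]
      have hsupp : (Q [x] P).support = P.support.preimage (fun u => u ++ [x])
          ((List.append_left_injective [x]).injOn) := rfl
      rw [hsupp]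
      have h1 : ∀ a ∈ P.support.preimage (fun u => u ++ [x])
          ((List.append_left_injective [x]).injOn),
          (Q [x] P) a • S a = P (a ++ [x]) • Sx x (a ++ [x]) := by
        intro a _
        rw [hQapp, hSx]
        simp [List.getLast?_concat, List.dropLast_concat]
      rw [Finset.sum_congr rfl h1]
      exact Finset.sum_preimage (fun u : List X => u ++ [x]) P.support
        ((List.append_left_injective [x]).injOn) (fun b => P b • Sx x b)
        (by
          intro b _ hb
          simp only [hSx]
          have : ¬ b.getLast? = some x := by
            intro h
            rcases b.eq_nil_or_concat with rfl | ⟨l, a, rfl⟩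
            · simp at h
            · rw [List.concat_eq_append, List.getLast?_concat] at h
              exact hb ⟨l, by simp [← Option.some_inj.mp h]⟩
          rw [if_neg this, smul_zero])
    -- Q w P₀ stays in the kernel
    have hker : ∀ (w : List X) (P : List X →₀ ℂ),
        (P.sum fun u c => c • S u) = 0 → ((Q w P).sum fun u c => c • S u) = 0 := by
      intro w
      induction w using List.reverseRecOn with
      | nil =>
        intro P hP
        have : Q [] P = P := by
          ext u; rw [hQapp]; simp
        rw [this]; exact hP
      | append_singleton w' x ih =>
        intro P hP
        have hcomp : Q (w' ++ [x]) P = Q w' (Q [x] P) := by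
          ext u; rw [hQapp, hQapp, hQapp, List.append_assoc]
        rw [hcomp]
        exact ih (Q [x] P) (by rw [key]; exact hi x P hP)
    -- now conclude P₀ = 0
    by_contra hne
    have hsupp : P₀.support.Nonempty := Finsupp.support_nonempty_iff.mpr hne
    obtain ⟨w₀, hw₀, hmax⟩ := Finset.exists_mem_eq_sup P₀.support hsupp List.length
    have hsingle : Q w₀ P₀ = Finsupp.single [] (P₀ w₀) := by
      ext u
      rw [hQapp]
      rcases eq_or_ne u [] with rfl | hu
      · simp
      · rw [Finsupp.single_apply, if_neg (Ne.symm hu)]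
        by_contra h
        have hmem : u ++ w₀ ∈ P₀.support := Finsupp.mem_support_iff.mpr h
        have := Finset.le_sup (f := List.length) hmem
        rw [hmax] at this
        simp only [List.length_append] at this
        have : u.length = 0 := by omega
        exact hu (List.length_eq_zero_iff.mp this)
    have := hker w₀ P₀ hP₀
    rw [hsingle, Finsupp.sum_single_index (by simp)] at this
    rw [hS1, Algebra.smul_def, mul_one] at this
    have : P₀ w₀ = 0 := (algebraMap ℂ A).injective (by simpa using this)
    exact Finsupp.mem_support_iff.mp hw₀ this
  · intro hvi x P hP
    rw [hvi P hP]
    simp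
end

section
/- Let A be a commutative ℂ-algebra with unit and S : X* → A a group-like series (⟨S,1⟩ = 1 and ⟨S,u⟩·⟨S,v⟩ = Σ_w (u ⧢ v)(w)·⟨S,w⟩ for all words u,v). Fix a letter x ∈ X and suppose ker_ℂ(S) ⊆ ker_ℂ(Sx), where Sx is the series with ⟨Sx,ux⟩ = ⟨S,u⟩ and ⟨Sx,w⟩ = 0 for w not ending in x. Then there exists a ℂ-linear map δ_x : F(S) → F(S) such that δ_x(⟨S,w⟩) = ⟨Sx,w⟩ for every word w, and δ_x is a derivation of the algebra F(S): δ_x(fg) = δ_x(f)·g + f·δ_x(g) for all f,g ∈ F(S). -/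
/-- The shuffle product of two words, as a finitely supported `ℕ`-valued
function on words, defined by the usual recursion `1 ⧢ w = w ⧢ 1 = w` and
`(xu) ⧢ (yv) = x·(u ⧢ (yv)) + y·((xu) ⧢ v)`. -/
noncomputable def shuffle {X : Type*} : List X → List X → (List X →₀ ℕ)
  | [], w => Finsupp.single w 1
  | x :: u, [] => Finsupp.single (x :: u) 1
  | x :: u, y :: v =>
      (shuffle u (y :: v)).mapDomain (x :: ·) +
      (shuffle (x :: u) v).mapDomain (y :: ·)
termination_by u v => u.length + v.length

lemma shuffle_nil_right' {X : Type*} (u : List X) : shuffle u [] = Finsupp.single u 1 := by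
  cases u <;> simp [shuffle]

/-- The last-letter recursion for the shuffle product. -/
lemma shuffle_concat' {X : Type*} (a b : X) :
    ∀ (p q : List X), shuffle (p ++ [a]) (q ++ [b]) =
      (shuffle p (q ++ [b])).mapDomain (· ++ [a]) +
      (shuffle (p ++ [a]) q).mapDomain (· ++ [b])
  | [], [] => by
    simp [shuffle, Finsupp.mapDomain_single, add_comm]
  | c :: p, [] => by
    have IH := shuffle_concat' a b p []
    simp only [List.cons_append, List.nil_append, shuffle, shuffle_nil_right'] at *
    rw [IH]
    simp only [Finsupp.mapDomain_add, Finsupp.mapDomain_single,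
      ← Finsupp.mapDomain_comp, Function.comp_def, List.cons_append]
    abel
  | [], d :: q => by
    have IH := shuffle_concat' a b [] q
    simp only [List.cons_append, List.nil_append, shuffle] at *
    rw [IH]
    simp only [Finsupp.mapDomain_add, Finsupp.mapDomain_single,
      ← Finsupp.mapDomain_comp, Function.comp_def, List.cons_append]
    abel
  | c :: p, d :: q => by
    have IH1 := shuffle_concat' a b p (d :: q)
    have IH2 := shuffle_concat' a b (c :: p) q
    simp only [List.cons_append, shuffle] at *
    rw [IH1, IH2]
    simp only [Finsupp.mapDomain_add, ← Finsupp.mapDomain_comp,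
      Function.comp_def, List.cons_append]
    abel
termination_by p q => p.length + q.length

section LeibnizAux

variable {A : Type*} [CommRing A] [Algebra ℂ A] {X : Type*} [DecidableEq X]
  (S : List X → A) (x : X) (Sx : List X → A)

omit [Algebra ℂ A] in
lemma Sx_concat' (hSx : ∀ w : List X,
      Sx w = if w.getLast? = some x then S w.dropLast else 0)
    (w : List X) (a : X) : Sx (w ++ [a]) = if a = x then S w else 0 := by
  rw [hSx]
  simp [List.getLast?_concat, List.dropLast_concat]

omit [Algebra ℂ A] in
/-- The Leibniz identity for the "delete a final `x`" series `Sx`. -/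
lemma shuffle_leibniz' (hS1 : S [] = 1)
    (hgl : ∀ u v : List X, S u * S v = (shuffle u v).sum fun w m => m • S w)
    (hSx : ∀ w : List X,
      Sx w = if w.getLast? = some x then S w.dropLast else 0)
    (u v : List X) :
    ((shuffle u v).sum fun w m => m • Sx w) = Sx u * S v + S u * Sx v := by
  have hSxnil : Sx [] = 0 := by simp [hSx]
  rcases u.eq_nil_or_concat with rfl | ⟨p, a, rfl⟩
  · simp [shuffle, Finsupp.sum_single_index, hSxnil, hS1]
  rcases v.eq_nil_or_concat with rfl | ⟨q, b, rfl⟩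
  · simp [shuffle_nil_right', Finsupp.sum_single_index, hSxnil, hS1]
  simp only [List.concat_eq_append]
  rw [shuffle_concat']
  rw [Finsupp.sum_add_index (by simp) (by intro w _ m n; rw [add_smul]),
    Finsupp.sum_mapDomain_index (by simp) (by intro w m n; rw [add_smul]),
    Finsupp.sum_mapDomain_index (by simp) (by intro w m n; rw [add_smul])]
  have key : ∀ (P : List X →₀ ℕ) (c : X),
      (P.sum fun w m => m • (if c = x then S w else 0)) =
        if c = x then P.sum (fun w m => m • S w) else 0 := by
    intro P c; split_ifs <;> simp
  simp only [Sx_concat' S x Sx hSx, key, ← hgl]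
  split_ifs <;> ring

end LeibnizAux

/-- **Proposition 4, (i) ⟹ (ii).**  Let `A` be a commutative unital
`ℂ`-algebra and `S : X* → A` a group-like series (`⟨S,1⟩ = 1` and
`⟨S,u⟩·⟨S,v⟩ = ⟨S, u ⧢ v⟩`).  Fix a letter `x` and let `Sx` be the series with
`⟨Sx,ux⟩ = ⟨S,u⟩`, `⟨Sx,w⟩ = 0` for `w` not ending in `x`.  If
`ker_ℂ(S) ⊆ ker_ℂ(Sx)`, then there is a `ℂ`-linear map `δ_x` with
`δ_x(⟨S,w⟩) = ⟨Sx,w⟩` for all words `w`, preserving the span `F(S)` of the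
coefficients of `S`, and which is a derivation of the algebra `F(S)`:
`δ_x(fg) = δ_x(f)·g + f·δ_x(g)` for all `f, g ∈ F(S)`. -/
theorem grouplike_kernel_stability_gives_derivation
    {A : Type*} [CommRing A] [Algebra ℂ A] {X : Type*} [DecidableEq X]
    (S : List X → A) (hS1 : S [] = 1)
    (hgl : ∀ u v : List X, S u * S v = (shuffle u v).sum fun w m => m • S w)
    (x : X) (Sx : List X → A)
    (hSx : ∀ w : List X,
      Sx w = if w.getLast? = some x then S w.dropLast else 0)
    (hker : ∀ P : List X →₀ ℂ, (P.sum fun w c => c • S w) = 0 →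
      (P.sum fun w c => c • Sx w) = 0) :
    ∃ δ : A →ₗ[ℂ] A,
      (∀ w : List X, δ (S w) = Sx w) ∧
      (∀ f ∈ Submodule.span ℂ (Set.range S),
        δ f ∈ Submodule.span ℂ (Set.range S)) ∧
      (∀ f ∈ Submodule.span ℂ (Set.range S),
        ∀ g ∈ Submodule.span ℂ (Set.range S),
        δ (f * g) = δ f * g + f * δ g) := by
  -- the coefficients of `Sx` lie in the span of the coefficients of `S`
  have hspan : ∀ w : List X, Sx w ∈ Submodule.span ℂ (Set.range S) := by
    intro w
    rw [hSx w]
    split_ifs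
    · exact Submodule.subset_span ⟨w.dropLast, rfl⟩
    · exact zero_mem _
  -- the key multiplicative identity, via the shuffle Leibniz rule
  have hmul : ∀ u v : List X, ∃ M : List X →₀ ℂ,
      S u * S v = (Finsupp.linearCombination ℂ S) M ∧
      (Finsupp.linearCombination ℂ Sx) M = Sx u * S v + S u * Sx v := by
    intro u v
    refine ⟨(shuffle u v).mapRange (Nat.cast : ℕ → ℂ) (by simp), ?_, ?_⟩
    · rw [Finsupp.linearCombination_apply,
        Finsupp.sum_mapRange_index (by intro w; simp), hgl u v]
      simp [Nat.cast_smul_eq_nsmul]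
    · rw [Finsupp.linearCombination_apply,
        Finsupp.sum_mapRange_index (by intro w; simp),
        ← shuffle_leibniz' S x Sx hS1 hgl hSx u v]
      simp [Nat.cast_smul_eq_nsmul]
  clear hgl hSx hS1
  set Φ : (List X →₀ ℂ) →ₗ[ℂ] A := Finsupp.linearCombination ℂ S with hΦ
  set Ψ : (List X →₀ ℂ) →ₗ[ℂ] A := Finsupp.linearCombination ℂ Sx with hΨ
  have hk : LinearMap.ker Φ ≤ LinearMap.ker Ψ := by
    intro P hP
    simp only [LinearMap.mem_ker, hΦ, hΨ, Finsupp.linearCombination_apply] at *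
    exact hker P hP
  set δ₀ : LinearMap.range Φ →ₗ[ℂ] A :=
    ((LinearMap.ker Φ).liftQ Ψ hk).comp Φ.quotKerEquivRange.symm.toLinearMap with hδ₀
  obtain ⟨δ, hδ⟩ := δ₀.exists_extend
  have hkey : ∀ P : List X →₀ ℂ, δ (Φ P) = Ψ P := by
    intro P
    have h1 : δ (Φ P) = δ₀ ⟨Φ P, LinearMap.mem_range_self Φ P⟩ := by
      rw [← hδ]; rfl
    rw [h1, hδ₀]
    simp only [LinearMap.comp_apply, LinearEquiv.coe_toLinearMap]
    rw [LinearMap.quotKerEquivRange_symm_apply_image]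
    rfl
  have hW : ∀ w : List X, δ (S w) = Sx w := by
    intro w
    have h := hkey (Finsupp.single w 1)
    rwa [hΦ, hΨ, Finsupp.linearCombination_single, Finsupp.linearCombination_single,
      one_smul, one_smul] at h
  refine ⟨δ, hW, ?_, ?_⟩
  · intro f hf
    induction hf using Submodule.span_induction with
    | mem a ha => obtain ⟨w, rfl⟩ := ha; rw [hW]; exact hspan w
    | zero => simp
    | add a b _ _ ha hb => rw [map_add]; exact add_mem ha hb
    | smul c a _ ha => rw [map_smul]; exact Submodule.smul_mem _ c ha
  · intro f hf g hg
    induction hf using Submodule.span_induction with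
    | mem a ha =>
      obtain ⟨u, rfl⟩ := ha
      induction hg using Submodule.span_induction with
      | mem b hb =>
        obtain ⟨v, rfl⟩ := hb
        obtain ⟨M, hM1, hM2⟩ := hmul u v
        rw [hM1, hkey, hM2, hW, hW]
      | zero => simp
      | add a b _ _ ha hb => rw [mul_add, map_add, ha, hb, map_add]; ring
      | smul c a _ ha => simp [mul_smul_comm, smul_mul_assoc, smul_add, ha]
    | zero => simp
    | add a b _ _ ha hb => rw [add_mul, map_add, ha, hb, map_add]; ring
    | smul c a _ ha => simp [mul_smul_comm, smul_mul_assoc, smul_add, ha]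
end

section
/- Infinite-alphabet hyperlogarithm independence: let I be an arbitrary index set (possibly uncountable), a : I → ℂ an injective map, λ : I → ℂ∖{0}, and V a nonempty connected simply connected open subset of ℂ ∖ a(I). Let X* be the free monoid of words over the alphabet X = I, and let (L_w)_{w∈X*} be a family of analytic functions on V with L_1 ≡ 1 and L_{i·u}'(z) = (λ_i/(z−a_i))·L_u(z) for every i ∈ I, word u, and z ∈ V. Then the family (L_w)_{w∈X*} is linearly independent over ℂ(z): if (f_w) is a finitely supported family of rational functions with Σ_w f_w(z)·L_w(z) = 0 for all z in some nonempty open subset of V avoiding the poles of all f_w, then every f_w = 0. -/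
open Polynomial

lemma open_infinite {U : Set ℂ} (hU : IsOpen U) (hne : U.Nonempty) : U.Infinite := by
  obtain ⟨z0, hz0⟩ := hne
  obtain ⟨r, hr, hball⟩ := Metric.isOpen_iff.mp hU z0 hz0
  have hmap : Set.MapsTo (fun t : ℝ => z0 + t) (Set.Ioo 0 (r/2)) U := by
    intro t ht
    apply hball
    simp only [Metric.mem_ball, dist_eq_norm]
    have : ‖(z0 + t) - z0‖ = |t| := by simp [Complex.norm_real]
    rw [this, abs_of_pos ht.1]
    linarith [ht.2]
  have hinj : Set.InjOn (fun t : ℝ => z0 + t) (Set.Ioo 0 (r/2)) := by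
    intro s _ t _ h
    simp only [add_right_inj] at h
    exact_mod_cast h
  have : (Set.Ioo (0:ℝ) (r/2)).Infinite := Set.Ioo_infinite (by linarith)
  exact ((this.image hinj)).mono (Set.image_subset_iff.mpr hmap)

lemma poly_zero_of_eqOn_open {p : ℂ[X]} {U : Set ℂ} (hU : IsOpen U) (hne : U.Nonempty)
    (h : ∀ z ∈ U, p.eval z = 0) : p = 0 :=
  p.eq_zero_of_infinite_isRoot ((open_infinite hU hne).mono h)

lemma const_on_ball {g : ℂ → ℂ} {z0 : ℂ} {r : ℝ}
    (hg : ∀ z ∈ Metric.ball z0 r, HasDerivAt g 0 z) :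
    ∀ z ∈ Metric.ball z0 r, g z = g z0 := by
  intro z hz
  have hz0 : z0 ∈ Metric.ball z0 r := by
    rcases Metric.nonempty_ball.mp ⟨z, hz⟩ with hr
    exact Metric.mem_ball_self hr
  refine (convex_ball z0 r).is_const_of_fderivWithin_eq_zero (𝕜 := ℂ)
    (fun x hx => ((hg x hx).differentiableAt).differentiableWithinAt) ?_ hz hz0
  intro x hx
  rw [fderivWithin_of_isOpen Metric.isOpen_ball hx]
  have := (hg x hx).hasFDerivAt.fderiv
  rw [this]
  ext y
  simp

lemma exists_const_of_wronskian {A B : ℂ[X]} (hB : B ≠ 0)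
    (h : derivative A * B = A * derivative B) : ∃ c : ℂ, A = C c * B := by
  have hfin : Set.Finite {x : ℂ | IsRoot B x} := B.finite_setOf_isRoot hB
  obtain ⟨z1, hz1⟩ := hfin.infinite_compl.nonempty
  have hop : IsOpen {x : ℂ | IsRoot B x}ᶜ := hfin.isClosed.isOpen_compl
  obtain ⟨r, hr, hball⟩ := Metric.isOpen_iff.mp hop z1 hz1
  have hBne : ∀ z ∈ Metric.ball z1 r, B.eval z ≠ 0 := fun z hz => hball hz
  have hderiv : ∀ z ∈ Metric.ball z1 r,
      HasDerivAt (fun y => A.eval y / B.eval y) 0 z := by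
    intro z hz
    have h1 := (A.hasDerivAt z).div (B.hasDerivAt z) (hBne z hz)
    have : (derivative A).eval z * B.eval z = A.eval z * (derivative B).eval z := by
      have := congrArg (eval z) h
      simpa [eval_mul] using this
    rw [this, sub_self, zero_div] at h1
    exact h1
  set c : ℂ := A.eval z1 / B.eval z1 with hc
  refine ⟨c, ?_⟩
  have hzero : A - C c * B = 0 := by
    apply poly_zero_of_eqOn_open Metric.isOpen_ball (Metric.nonempty_ball.mpr hr)
    intro z hz
    have hcz := const_on_ball hderiv z hz
    have : A.eval z / B.eval z = c := hcz
    rw [div_eq_iff (hBne z hz)] at this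
    simp only [eval_sub, eval_mul, eval_C, this]
    ring
  linear_combination hzero


lemma residue_coprime {ι : Type*} [DecidableEq ι] (s : Finset ι) (b : ι → ℂ)
    (hb : Set.InjOn b s) (c : ι → ℂ) (A B : ℂ[X]) (hB : B ≠ 0) (hAB : IsCoprime A B)
    (heq : (derivative A * B - A * derivative B) * (∏ i ∈ s, (X - C (b i)))
        = (∑ i ∈ s, C (c i) * ∏ k ∈ s.erase i, (X - C (b k))) * B ^ 2) :
    ∀ j ∈ s, c j = 0 := by
  intro j hj
  set β := b j with hβ
  set NN : ℂ[X] := ∑ i ∈ s, C (c i) * ∏ k ∈ s.erase i, (X - C (b k)) with hNN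
  set πj : ℂ[X] := ∏ k ∈ s.erase j, (X - C (b k)) with hπj
  have hπjβ : πj.eval β ≠ 0 := by
    rw [hπj, eval_prod]
    rw [Finset.prod_ne_zero_iff]
    intro k hk
    simp only [eval_sub, eval_X, eval_C, sub_ne_zero]
    intro hbk
    exact (Finset.mem_erase.mp hk).1 (hb (Finset.mem_erase.mp hk).2 hj hbk.symm)
  have hNβ : NN.eval β = c j * πj.eval β := by
    rw [hNN, eval_finset_sum]
    rw [Finset.sum_eq_single j]
    · simp [hπj]
    · intro i hi hij
      rw [eval_mul, eval_prod]
      rw [Finset.prod_eq_zero (Finset.mem_erase.mpr ⟨(Ne.symm hij), hj⟩)]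
      · ring
      · simp [hβ]
    · intro h; exact absurd hj h
  by_cases hW : derivative A * B - A * derivative B = 0
  · rw [hW, zero_mul] at heq
    have hN0 : NN = 0 := by
      rcases mul_eq_zero.mp heq.symm with h | h
      · exact h
      · exact absurd h (pow_ne_zero 2 hB)
    have := congrArg (eval β) hN0
    rw [hNβ] at this
    simp only [eval_zero] at this
    rcases mul_eq_zero.mp this with h | h
    · exact h
    · exact absurd h hπjβ
  by_cases hBβ : B.eval β = 0
  · exfalso
    set n := rootMultiplicity β B with hn
    have hnpos : 0 < n := (rootMultiplicity_pos hB).mpr hBβ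
    set T := B /ₘ (X - C β) ^ n with hT
    have hTβ : T.eval β ≠ 0 := eval_divByMonic_pow_rootMultiplicity_ne_zero β hB
    have hfac : (X - C β) ^ n * T = B := pow_mul_divByMonic_rootMultiplicity_eq B β
    have hAβ : A.eval β ≠ 0 := by
      obtain ⟨u, v, huv⟩ := hAB
      have := congrArg (eval β) huv
      simp only [eval_add, eval_mul, eval_one, hBβ, mul_zero, add_zero] at this
      intro h0
      rw [h0, mul_zero] at this
      exact zero_ne_one this
    obtain ⟨n', hn'⟩ : ∃ n', n = n' + 1 := ⟨n - 1, by omega⟩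
    set S : ℂ[X] := C (n : ℂ) * T + (X - C β) * derivative T with hS
    have hSβ : S.eval β ≠ 0 := by
      rw [hS]
      simp only [eval_add, eval_mul, eval_C, eval_sub, eval_X, sub_self, zero_mul, add_zero]
      exact mul_ne_zero (Nat.cast_ne_zero.mpr hnpos.ne') hTβ
    have hdB : derivative B = (X - C β) ^ n' * S := by
      have hB' : derivative B = derivative ((X - C β) ^ (n' + 1) * T) := by
        rw [← hfac, ← hn']
      rw [hB', derivative_mul, derivative_pow]
      simp only [derivative_sub, derivative_X, derivative_C, sub_zero, mul_one, hS, hn',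
        Nat.add_sub_cancel]
      push_cast
      ring
    set W1 : ℂ[X] := derivative A * ((X - C β) * T) - A * S with hW1
    have hWfac : derivative A * B - A * derivative B = (X - C β) ^ n' * W1 := by
      rw [hdB, ← hfac, hn', hW1]
      ring
    have hW1β : W1.eval β ≠ 0 := by
      rw [hW1]
      simp only [eval_sub, eval_mul, eval_X, eval_C, sub_self, zero_mul, mul_zero, zero_sub]
      exact neg_ne_zero.mpr (mul_ne_zero hAβ hSβ)
    have hPifac : (∏ i ∈ s, (X - C (b i))) = (X - C β) * πj := by
      rw [hπj, hβ]
      exact (Finset.mul_prod_erase s _ hj).symm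
    have hkey : (X - C β) ^ n * (W1 * πj) = (X - C β) ^ n * ((X - C β) ^ n * (NN * T ^ 2)) := by
      have h1 : (X - C β) ^ n * (W1 * πj)
          = (derivative A * B - A * derivative B) * (∏ i ∈ s, (X - C (b i))) := by
        rw [hWfac, hPifac, hn']; ring
      have h2 : (X - C β) ^ n * ((X - C β) ^ n * (NN * T ^ 2)) = NN * B ^ 2 := by
        rw [← hfac]; ring
      rw [h1, h2]; exact heq
    have hcancel := mul_left_cancel₀ (pow_ne_zero n (X_sub_C_ne_zero β)) hkey
    have := congrArg (eval β) hcancel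
    rw [eval_mul] at this
    rw [eval_mul, eval_pow] at this
    simp only [eval_sub, eval_X, eval_C, sub_self] at this
    rw [zero_pow hnpos.ne', zero_mul] at this
    exact (mul_ne_zero hW1β hπjβ) this
  · -- B.eval β ≠ 0
    have := congrArg (eval β) heq
    rw [eval_mul, eval_mul, eval_prod] at this
    rw [Finset.prod_eq_zero hj (by simp [hβ])] at this
    rw [mul_zero] at this
    rw [hNβ, eval_pow] at this
    have h2 : c j * (πj.eval β * (B.eval β) ^ 2) = 0 := by linear_combination -this
    rcases mul_eq_zero.mp h2 with h | h
    · exact h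
    · exact absurd h (mul_ne_zero hπjβ (pow_ne_zero 2 hBβ))

lemma residue_lemma {ι : Type*} [DecidableEq ι] (s : Finset ι) (b : ι → ℂ)
    (hb : Set.InjOn b s) (c : ι → ℂ) (A B : ℂ[X]) (hB : B ≠ 0)
    (heq : (derivative A * B - A * derivative B) * (∏ i ∈ s, (X - C (b i)))
        = (∑ i ∈ s, C (c i) * ∏ k ∈ s.erase i, (X - C (b k))) * B ^ 2) :
    ∀ j ∈ s, c j = 0 := by
  set g := GCDMonoid.gcd A B with hg
  have hgne : g ≠ 0 := gcd_ne_zero_of_right hB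
  set A1 := A / g with hA1
  set B1 := B / g with hB1
  have hA : A = g * A1 := (EuclideanDomain.mul_div_cancel' hgne (gcd_dvd_left A B)).symm
  have hBe : B = g * B1 := (EuclideanDomain.mul_div_cancel' hgne (gcd_dvd_right A B)).symm
  have hB1ne : B1 ≠ 0 := by
    intro h0; rw [h0, mul_zero] at hBe; exact hB hBe
  have hco : IsCoprime A1 B1 := isCoprime_div_gcd_div_gcd hB
  apply residue_coprime s b hb c A1 B1 hB1ne hco
  have hkey : g ^ 2 * ((derivative A1 * B1 - A1 * derivative B1) * (∏ i ∈ s, (X - C (b i))))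
      = g ^ 2 * ((∑ i ∈ s, C (c i) * ∏ k ∈ s.erase i, (X - C (b k))) * B1 ^ 2) := by
    have e1 : derivative A * B - A * derivative B
        = g ^ 2 * (derivative A1 * B1 - A1 * derivative B1) := by
      rw [hA, hBe, derivative_mul, derivative_mul]; ring
    have e2 : B ^ 2 = g ^ 2 * B1 ^ 2 := by rw [hBe]; ring
    calc g ^ 2 * ((derivative A1 * B1 - A1 * derivative B1) * (∏ i ∈ s, (X - C (b i))))
        = (derivative A * B - A * derivative B) * (∏ i ∈ s, (X - C (b i))) := by rw [e1]; ring
      _ = (∑ i ∈ s, C (c i) * ∏ k ∈ s.erase i, (X - C (b k))) * B ^ 2 := heq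
      _ = g ^ 2 * ((∑ i ∈ s, C (c i) * ∏ k ∈ s.erase i, (X - C (b k))) * B1 ^ 2) := by rw [e2]; ring
  exact mul_left_cancel₀ (pow_ne_zero 2 hgne) hkey

section evsum
variable {I : Type*}

lemma evsum_add (L : List I → ℂ → ℂ) (z : ℂ) (F G : List I →₀ Polynomial ℂ) :
    ((F + G).sum fun w P => P.eval z * L w z)
      = (F.sum fun w P => P.eval z * L w z) + (G.sum fun w P => P.eval z * L w z) :=
  Finsupp.sum_add_index' (fun w => by simp) (fun w P Q => by simp [add_mul])

lemma evsum_single (L : List I → ℂ → ℂ) (z : ℂ) (w : List I) (P : ℂ[X]) :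
    ((Finsupp.single w P).sum fun u Q => Q.eval z * L u z) = P.eval z * L w z :=
  Finsupp.sum_single_index (by simp)

lemma evsum_finset_sum {α : Type*} (L : List I → ℂ → ℂ) (z : ℂ) (s : Finset α)
    (g : α → (List I →₀ Polynomial ℂ)) :
    ((∑ x ∈ s, g x).sum fun w P => P.eval z * L w z)
      = ∑ x ∈ s, ((g x).sum fun w P => P.eval z * L w z) := by
  classical
  induction s using Finset.induction_on with
  | empty => simp
  | insert a s h ih => rw [Finset.sum_insert h, Finset.sum_insert h, evsum_add, ih]

end evsum

lemma poly_indep {I : Type*} (a : I → ℂ) (ha : Function.Injective a)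
    (lam : I → ℂ) (hlam : ∀ i, lam i ≠ 0)
    (V : Set ℂ) (hVo : IsOpen V)
    (hVa : ∀ i, ∀ z ∈ V, z ≠ a i)
    (L : List I → ℂ → ℂ)
    (hL1 : ∀ z ∈ V, L [] z = 1)
    (hLd : ∀ (i : I) (u : List I), ∀ z ∈ V,
      HasDerivAt (L (i :: u)) (lam i / (z - a i) * L u z) z) :
    ∀ (N : ℕ) (F : List I →₀ Polynomial ℂ),
      (∀ w ∈ F.support, w.length ≤ N) →
      ∀ (U : Set ℂ), IsOpen U → U.Nonempty → U ⊆ V →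
      (∀ z ∈ U, (F.sum fun w P => P.eval z * L w z) = 0) → F = 0 := by
  classical
  intro N
  induction N with
  | zero =>
    intro F hlen U hUo hUne hUV hrel
    refine Finsupp.ext fun w => ?_
    simp only [Finsupp.coe_zero, Pi.zero_apply]
    by_cases hw : w ∈ F.support
    swap
    · exact Finsupp.notMem_support_iff.mp hw
    have hw0 : w = [] := List.length_eq_zero_iff.mp (Nat.le_zero.mp (hlen w hw))
    subst hw0
    have hs : F.support = {([] : List I)} := by
      apply Finset.eq_singleton_iff_unique_mem.mpr
      exact ⟨hw, fun u hu => List.length_eq_zero_iff.mp (Nat.le_zero.mp (hlen u hu))⟩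
    have hzero : ∀ z ∈ U, (F []).eval z = 0 := by
      intro z hz
      have := hrel z hz
      rw [Finsupp.sum, hs, Finset.sum_singleton, hL1 z (hUV hz), mul_one] at this
      exact this
    exact poly_zero_of_eqOn_open hUo hUne hzero
  | succ N ihN =>
    suffices inner : ∀ (m : ℕ) (F : List I →₀ Polynomial ℂ),
        (∀ w ∈ F.support, w.length ≤ N + 1) →
        ((F.support.filter (fun w => w.length = N + 1)).card ≤ m) →
        ∀ (U : Set ℂ), IsOpen U → U.Nonempty → U ⊆ V →
        (∀ z ∈ U, (F.sum fun w P => P.eval z * L w z) = 0) → F = 0 by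
      intro F hlen U hUo hUne hUV hrel
      exact inner _ F hlen le_rfl U hUo hUne hUV hrel
    intro m
    induction m with
    | zero =>
      intro F hlen hcard U hUo hUne hUV hrel
      apply ihN F _ U hUo hUne hUV hrel
      intro w hw
      have hne : w.length ≠ N + 1 := by
        intro hl
        have : w ∈ F.support.filter (fun w => w.length = N + 1) :=
          Finset.mem_filter.mpr ⟨hw, hl⟩
        have := Finset.card_pos.mpr ⟨w, this⟩
        omega
      have := hlen w hw
      omega
    | succ m ihm =>
      intro F hlen hcard U hUo hUne hUV hrel
      by_cases hex : ∃ w0 ∈ F.support, w0.length = N + 1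
      swap
      · apply ihm F hlen _ U hUo hUne hUV hrel
        have : F.support.filter (fun w => w.length = N + 1) = ∅ := by
          apply Finset.filter_eq_empty_iff.mpr
          intro w hw hl
          exact hex ⟨w, hw, hl⟩
        rw [this]
        simp
      obtain ⟨w0, hw0s, hw0l⟩ := hex
      obtain ⟨i0, u0, rfl⟩ : ∃ i0 u0, w0 = i0 :: u0 := by
        cases w0 with
        | nil => simp at hw0l
        | cons i u => exact ⟨i, u, rfl⟩
      set B := F (i0 :: u0) with hBdef
      have hBne : B ≠ 0 := Finsupp.mem_support_iff.mp hw0s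
      set heads : Finset I := F.support.biUnion
        (fun w => match w with | [] => ∅ | i :: _ => {i}) with hheadsdef
      have hhead_mem : ∀ (i : I) (u : List I), (i :: u) ∈ F.support → i ∈ heads := by
        intro i u hw
        rw [hheadsdef]
        exact Finset.mem_biUnion.mpr ⟨i :: u, hw, by simp⟩
      set D : ℂ[X] := ∏ i ∈ heads, (X - C (a i)) with hDdef
      set cofac : I → ℂ[X] := fun i => ∏ k ∈ heads.erase i, (X - C (a k)) with hcofacdef
      have hDfac : ∀ i ∈ heads, D = (X - C (a i)) * cofac i := by
        intro i hi
        rw [hDdef, hcofacdef]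
        exact (Finset.mul_prod_erase heads _ hi).symm
      have hDne : D ≠ 0 := by
        rw [hDdef]
        exact Finset.prod_ne_zero_iff.mpr (fun i _ => X_sub_C_ne_zero (a i))
      set main : List I → ℂ[X] :=
        fun w => D * (B * derivative (F w) - derivative B * (F w)) with hmaindef
      set sec : List I → (List I →₀ Polynomial ℂ) :=
        fun w => match w with
          | [] => 0
          | i :: u => Finsupp.single u (C (lam i) * cofac i * (B * F (i :: u))) with hsecdef
      set G : List I →₀ Polynomial ℂ :=
        (∑ w ∈ F.support, Finsupp.single w (main w)) + (∑ w ∈ F.support, sec w) with hGdef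
      -- component helper lemmas
      have hG1app : ∀ u : List I, (∑ w ∈ F.support, Finsupp.single w (main w)) u
          = if u ∈ F.support then main u else 0 := by
        intro u
        rw [Finsupp.finset_sum_apply]
        rw [Finset.sum_congr rfl (fun w _ => Finsupp.single_apply)]
        exact Finset.sum_ite_eq' F.support u main
      have hsecnil : sec [] = 0 := by simp only [hsecdef]
      have hseccons : ∀ (i : I) (u : List I),
          sec (i :: u) = Finsupp.single u (C (lam i) * cofac i * (B * F (i :: u))) := by
        intro i u; simp only [hsecdef]
      have hsec_zero_long : ∀ u : List I, N + 1 ≤ u.length →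
          ∀ w ∈ F.support, (sec w) u = 0 := by
        intro u hu w hw
        cases w with
        | nil => rw [hsecnil]; rfl
        | cons i t =>
          rw [hseccons, Finsupp.single_apply]
          rw [if_neg]
          intro ht
          subst ht
          have := hlen (i :: t) hw
          simp only [List.length_cons] at this
          omega
      have hGw0 : G (i0 :: u0) = 0 := by
        rw [hGdef]
        rw [Finsupp.add_apply, hG1app, Finsupp.finset_sum_apply]
        have h1 : (if (i0 :: u0) ∈ F.support then main (i0 :: u0) else 0) = 0 := by
          rw [if_pos hw0s]
          simp only [hmaindef]
          rw [← hBdef, mul_comm B (derivative B), sub_self, mul_zero]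
        have h2 : (∑ w ∈ F.support, (sec w) (i0 :: u0)) = 0 :=
          Finset.sum_eq_zero (hsec_zero_long (i0 :: u0) (le_of_eq hw0l.symm))
        rw [h1, h2, add_zero]
      -- the derived relation holds on U
      have hGrel : ∀ z ∈ U, (G.sum fun w P => P.eval z * L w z) = 0 := by
        intro z hz
        have zV : z ∈ V := hUV hz
        set ℓ : List I → ℂ := fun w => match w with
          | [] => 0
          | i :: u => lam i / (z - a i) * L u z with hldef
        have hL' : ∀ w : List I, HasDerivAt (L w) (ℓ w) z := by
          intro w
          cases w with
          | nil =>
            have hEq : L [] =ᶠ[nhds z] fun _ => (1 : ℂ) :=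
              Filter.eventuallyEq_of_mem (hVo.mem_nhds zV) (fun y hy => hL1 y hy)
            have h1 := (hasDerivAt_const z (1 : ℂ)).congr_of_eventuallyEq hEq
            simpa [hldef] using h1
          | cons i u =>
            have h1 := hLd i u z zV
            simpa [hldef] using h1
        have hPhider : HasDerivAt (fun y => ∑ w ∈ F.support, (F w).eval y * L w y)
            (∑ w ∈ F.support, ((derivative (F w)).eval z * L w z + (F w).eval z * ℓ w)) z :=
          HasDerivAt.fun_sum fun w _ => ((F w).hasDerivAt z).fun_mul (hL' w)
        have hPhi0 : HasDerivAt (fun y => ∑ w ∈ F.support, (F w).eval y * L w y) 0 z := by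
          have hEq : (fun y => ∑ w ∈ F.support, (F w).eval y * L w y)
              =ᶠ[nhds z] fun _ => (0 : ℂ) :=
            Filter.eventuallyEq_of_mem (hUo.mem_nhds hz) (fun y hy => hrel y hy)
          exact (hasDerivAt_const z (0 : ℂ)).congr_of_eventuallyEq hEq
        have hsum0 : (∑ w ∈ F.support,
            ((derivative (F w)).eval z * L w z + (F w).eval z * ℓ w)) = 0 :=
          hPhider.unique hPhi0
        have hPhiz : (∑ w ∈ F.support, (F w).eval z * L w z) = 0 := hrel z hz
        have hterm : ∀ w ∈ F.support,
            (((Finsupp.single w (main w)).sum fun u Q => Q.eval z * L u z)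
              + ((sec w).sum fun u Q => Q.eval z * L u z))
            = (D.eval z * B.eval z)
                * ((derivative (F w)).eval z * L w z + (F w).eval z * ℓ w)
              - (D.eval z * (derivative B).eval z) * ((F w).eval z * L w z) := by
          intro w hw
          cases w with
          | nil =>
            rw [evsum_single, hsecnil]
            have hl0 : ℓ [] = 0 := by simp [hldef]
            rw [hl0]
            simp only [Finsupp.sum_zero_index, hmaindef, eval_mul, eval_sub]
            ring
          | cons i u =>
            rw [evsum_single, hseccons, evsum_single]
            have hi : i ∈ heads := hhead_mem i u hw
            have hzai : z - a i ≠ 0 := sub_ne_zero.mpr (hVa i z zV)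
            have hDz : D.eval z = (z - a i) * (cofac i).eval z := by
              rw [hDfac i hi, eval_mul]
              simp
            have hlval : ℓ (i :: u) = lam i / (z - a i) * L u z := by simp [hldef]
            rw [hlval]
            simp only [hmaindef, eval_mul, eval_sub, eval_C]
            rw [hDz]
            field_simp
            ring
        calc (G.sum fun u Q => Q.eval z * L u z)
            = ∑ w ∈ F.support,
                (((Finsupp.single w (main w)).sum fun u Q => Q.eval z * L u z)
                  + ((sec w).sum fun u Q => Q.eval z * L u z)) := by
              rw [hGdef, evsum_add L z, evsum_finset_sum, evsum_finset_sum,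
                Finset.sum_add_distrib]
          _ = ∑ w ∈ F.support,
                ((D.eval z * B.eval z)
                    * ((derivative (F w)).eval z * L w z + (F w).eval z * ℓ w)
                  - (D.eval z * (derivative B).eval z) * ((F w).eval z * L w z)) :=
              Finset.sum_congr rfl hterm
          _ = (D.eval z * B.eval z)
                * (∑ w ∈ F.support,
                    ((derivative (F w)).eval z * L w z + (F w).eval z * ℓ w))
              - (D.eval z * (derivative B).eval z)
                * (∑ w ∈ F.support, (F w).eval z * L w z) := by
              rw [Finset.sum_sub_distrib, ← Finset.mul_sum, ← Finset.mul_sum]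
          _ = 0 := by rw [hsum0, hPhiz]; ring
      -- support bounds for G
      have hGlen : ∀ u ∈ G.support, u.length ≤ N + 1 := by
        intro u hu
        by_contra hlong
        push_neg at hlong
        have hGu : G u = 0 := by
          rw [hGdef, Finsupp.add_apply, hG1app, Finsupp.finset_sum_apply]
          have h1 : (if u ∈ F.support then main u else 0) = 0 := by
            rw [if_neg]
            intro hmem
            have := hlen u hmem
            omega
          have h2 : (∑ w ∈ F.support, (sec w) u) = 0 :=
            Finset.sum_eq_zero (hsec_zero_long u (by omega))
          rw [h1, h2, add_zero]
        exact (Finsupp.mem_support_iff.mp hu) hGu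
      have hGtop : ∀ u, u.length = N + 1 → G u = (if u ∈ F.support then main u else 0) := by
        intro u hul
        rw [hGdef, Finsupp.add_apply, hG1app, Finsupp.finset_sum_apply]
        have h2 : (∑ w ∈ F.support, (sec w) u) = 0 :=
          Finset.sum_eq_zero (hsec_zero_long u (le_of_eq hul.symm))
        rw [h2, add_zero]
      have hGcard : (G.support.filter (fun w => w.length = N + 1)).card ≤ m := by
        have hsub : G.support.filter (fun w => w.length = N + 1)
            ⊆ (F.support.filter (fun w => w.length = N + 1)).erase (i0 :: u0) := by
          intro u hu
          obtain ⟨huG, hul⟩ := Finset.mem_filter.mp hu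
          have hGu := Finsupp.mem_support_iff.mp huG
          have hu_mem : u ∈ F.support := by
            by_contra hmem
            apply hGu
            rw [hGtop u hul, if_neg hmem]
          refine Finset.mem_erase.mpr ⟨?_, Finset.mem_filter.mpr ⟨hu_mem, hul⟩⟩
          intro hEq
          rw [hEq] at hGu
          exact hGu hGw0
        have hmemf : (i0 :: u0) ∈ F.support.filter (fun w => w.length = N + 1) :=
          Finset.mem_filter.mpr ⟨hw0s, hw0l⟩
        have h1 := Finset.card_le_card hsub
        rw [Finset.card_erase_of_mem hmemf] at h1
        omega
      have hG0 : G = 0 := ihm G hGlen hGcard U hUo hUne hUV hGrel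
      -- consequences : top coefficients proportional to B
      have htop : ∀ w ∈ F.support, w.length = N + 1 → ∃ c : ℂ, F w = C c * B := by
        intro w hw hwl
        have h1 : main w = 0 := by
          have h2 : G w = 0 := by rw [hG0]; rfl
          rw [hGtop w hwl, if_pos hw] at h2
          exact h2
        simp only [hmaindef] at h1
        rcases mul_eq_zero.mp h1 with h | h
        · exact absurd h hDne
        · have hwr : derivative (F w) * B = (F w) * derivative B := by
            linear_combination h
          exact exists_const_of_wronskian hBne hwr
      have hu0len : u0.length = N := by
        simp only [List.length_cons] at hw0l
        omega
      have hcfun : ∀ i : I, ∃ ci : ℂ, ((i :: u0) ∈ F.support → F (i :: u0) = C ci * B)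
          ∧ ((i :: u0) ∉ F.support → ci = 0) := by
        intro i
        by_cases h : (i :: u0) ∈ F.support
        · obtain ⟨ci, hci⟩ := htop (i :: u0) h (by simp [hu0len])
          exact ⟨ci, fun _ => hci, fun h' => absurd h h'⟩
        · exact ⟨0, fun h' => absurd h' h, fun _ => rfl⟩
      choose cc hcc1 hcc2 using hcfun
      -- the u0 component of G = 0 gives a residue equation
      have hGu0 : main u0 + (∑ w ∈ F.support, (sec w) u0) = 0 := by
        have h2 : G u0 = 0 := by rw [hG0]; rfl
        rw [hGdef, Finsupp.add_apply, hG1app, Finsupp.finset_sum_apply] at h2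
        have hfirst : (if u0 ∈ F.support then main u0 else 0) = main u0 := by
          by_cases h : u0 ∈ F.support
          · rw [if_pos h]
          · rw [if_neg h]
            simp only [hmaindef]
            rw [Finsupp.notMem_support_iff.mp h]
            simp
        rw [hfirst] at h2
        exact h2
      have hsecsum : (∑ w ∈ F.support, (sec w) u0)
          = (∑ i ∈ heads, C (lam i * cc i) * cofac i) * B ^ 2 := by
        have step1 : ∀ w ∈ F.support, (sec w) u0
            = ∑ i ∈ heads,
                (if w = i :: u0 then C (lam i) * cofac i * (B * F (i :: u0)) else 0) := by
          intro w hw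
          cases w with
          | nil =>
            rw [hsecnil]
            symm
            apply Finset.sum_eq_zero
            intro i _
            rw [if_neg]
            simp
          | cons j t =>
            rw [hseccons, Finsupp.single_apply]
            by_cases ht : t = u0
            · subst ht
              rw [if_pos rfl]
              rw [Finset.sum_eq_single j]
              · rw [if_pos rfl]
              · intro i hi hij
                rw [if_neg]
                simp only [List.cons.injEq, not_and]
                intro hji
                exact absurd hji.symm hij
              · intro hj
                exact absurd (hhead_mem j t hw) hj
            · rw [if_neg ht]
              symm
              apply Finset.sum_eq_zero
              intro i _
              rw [if_neg]
              simp only [List.cons.injEq, not_and]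
              intro _
              exact ht
        rw [Finset.sum_congr rfl step1, Finset.sum_comm]
        rw [Finset.sum_mul]
        apply Finset.sum_congr rfl
        intro i hi
        rw [Finset.sum_ite_eq' F.support (i :: u0)
          (fun _ => C (lam i) * cofac i * (B * F (i :: u0)))]
        by_cases h : (i :: u0) ∈ F.support
        · rw [if_pos h, hcc1 i h, C_mul]
          ring
        · rw [if_neg h, hcc2 i h]
          simp
      have hres_eq : (derivative (F u0) * B - (F u0) * derivative B) * D
          = (∑ i ∈ heads, C (-(lam i * cc i)) * cofac i) * B ^ 2 := by
        have h1 : (∑ i ∈ heads, C (-(lam i * cc i)) * cofac i)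
            = -(∑ i ∈ heads, C (lam i * cc i) * cofac i) := by
          rw [← Finset.sum_neg_distrib]
          apply Finset.sum_congr rfl
          intro i _
          rw [map_neg, neg_mul]
        rw [h1]
        have h2 := hGu0
        rw [hsecsum] at h2
        simp only [hmaindef] at h2
        linear_combination h2
      have hres_eq' : (derivative (F u0) * B - (F u0) * derivative B)
            * (∏ i ∈ heads, (X - C (a i)))
          = (∑ i ∈ heads, C ((fun i => -(lam i * cc i)) i)
              * ∏ k ∈ heads.erase i, (X - C (a k))) * B ^ 2 := by
        rw [← hDdef]
        convert hres_eq using 3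
      have hc0 := residue_lemma heads a (Set.injOn_of_injective ha)
        (fun i => -(lam i * cc i)) (F u0) B hBne hres_eq' i0 (hhead_mem i0 u0 hw0s)
      simp only [neg_eq_zero] at hc0
      have hcc0 : cc i0 = 0 := by
        rcases mul_eq_zero.mp hc0 with h | h
        · exact absurd h (hlam i0)
        · exact h
      have hfin : B = C (cc i0) * B := by
        rw [← hcc1 i0 hw0s, ← hBdef]
      rw [hcc0, map_zero, zero_mul] at hfin
      exact absurd hfin hBne



/-- **Hyperlogarithm independence for an arbitrary (possibly uncountable)
alphabet of singularities.**  Let `I` be any index set, `a : I → ℂ` injective,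
`λ : I → ℂ∖{0}`, and `V` a nonempty connected simply connected open subset of
`ℂ ∖ a(I)`.  Let `(L_w)` be a family of analytic functions on `V` indexed by
words over `I`, with `L_1 ≡ 1` and `L_{i·u}'(z) = (λ_i/(z−a_i))·L_u(z)` on
`V`.  If `(f_w)` is a finitely supported family of rational functions with
`Σ_w f_w(z)·L_w(z) = 0` on a nonempty open subset of `V` avoiding the poles
of all the `f_w`, then every `f_w = 0`. -/
theorem hyperlog_linear_independence_infinite_alphabet
    {I : Type*} (a : I → ℂ) (ha : Function.Injective a)
    (lam : I → ℂ) (hlam : ∀ i, lam i ≠ 0)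
    (V : Set ℂ) (hVo : IsOpen V) (hVc : IsConnected V)
    (hVsc : SimplyConnectedSpace V)
    (hVa : ∀ i, ∀ z ∈ V, z ≠ a i)
    (L : List I → ℂ → ℂ)
    (hLa : ∀ w, AnalyticOnNhd ℂ (L w) V)
    (hL1 : ∀ z ∈ V, L [] z = 1)
    (hLd : ∀ (i : I) (u : List I), ∀ z ∈ V,
      HasDerivAt (L (i :: u)) (lam i / (z - a i) * L u z) z)
    (f : List I →₀ RatFunc ℂ)
    (U : Set ℂ) (hUo : IsOpen U) (hUne : U.Nonempty) (hUV : U ⊆ V)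
    (hpoles : ∀ w, ∀ z ∈ U, Polynomial.eval z (f w).denom ≠ 0)
    (hrel : ∀ z ∈ U,
      (f.sum fun w r => RatFunc.eval (RingHom.id ℂ) z r * L w z) = 0) :
    f = 0 := by
  classical
  set F : List I →₀ Polynomial ℂ := ∑ w ∈ f.support,
    Finsupp.single w ((f w).num * ∏ w' ∈ f.support.erase w, (f w').denom) with hFdef
  have hFapp : ∀ u, F u = if u ∈ f.support
      then (f u).num * ∏ w' ∈ f.support.erase u, (f w').denom else 0 := by
    intro u
    rw [hFdef, Finsupp.finset_sum_apply]
    rw [Finset.sum_congr rfl (fun w _ => Finsupp.single_apply)]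
    exact Finset.sum_ite_eq' _ u _
  have hFrel : ∀ z ∈ U, (F.sum fun w P => P.eval z * L w z) = 0 := by
    intro z hz
    have hd : ∀ w, Polynomial.eval z (f w).denom ≠ 0 := fun w => hpoles w z hz
    calc (F.sum fun w P => P.eval z * L w z)
        = ∑ w ∈ f.support,
            (((f w).num * ∏ w' ∈ f.support.erase w, (f w').denom).eval z * L w z) := by
          rw [hFdef, evsum_finset_sum]
          exact Finset.sum_congr rfl (fun w _ => evsum_single L z w _)
      _ = (∏ w' ∈ f.support, ((f w').denom).eval z)
            * ∑ w ∈ f.support, (RatFunc.eval (RingHom.id ℂ) z (f w) * L w z) := by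
          rw [Finset.mul_sum]
          apply Finset.sum_congr rfl
          intro w hw
          have hev : RatFunc.eval (RingHom.id ℂ) z (f w)
              = (f w).num.eval z / (f w).denom.eval z := rfl
          rw [eval_mul, eval_prod, hev]
          rw [← Finset.prod_erase_mul f.support _ hw]
          field_simp [hd w]
      _ = 0 := by
          have h0 : (∑ w ∈ f.support, (RatFunc.eval (RingHom.id ℂ) z (f w) * L w z)) = 0 :=
            hrel z hz
          rw [h0, mul_zero]
  have hbound : ∀ w ∈ F.support, w.length ≤ F.support.sup List.length :=
    fun w hw => Finset.le_sup hw
  have hF0 : F = 0 := poly_indep a ha lam hlam V hVo hVa L hL1 hLd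
    (F.support.sup List.length) F hbound U hUo hUne hUV hFrel
  refine Finsupp.ext fun w => ?_
  simp only [Finsupp.coe_zero, Pi.zero_apply]
  by_cases hw : w ∈ f.support
  swap
  · exact Finsupp.notMem_support_iff.mp hw
  have h1 : F w = 0 := by rw [hF0]; rfl
  rw [hFapp, if_pos hw] at h1
  rcases mul_eq_zero.mp h1 with h | h
  · exact RatFunc.num_eq_zero_iff.mp h
  · exfalso
    rw [Finset.prod_eq_zero_iff] at h
    obtain ⟨w', _, hw'⟩ := h
    exact RatFunc.denom_ne_zero (f w') hw'
end
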